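/- arXiv:1905.04904 — 9 statements merged into one kernel-verified Lean document; each statement's English description precedes it below -/
import Mathlib

section
/- Let τ be a monotone skew-product (semi)flow on Ω×ℙ×ℝ≥0 whose fiber component r(t,ω,θ,r₀) solves r' = r(g(ω·t, θ̃(t,ω,θ)) − k_ρ(r)). Then τ is concave in the fiber: for all η ∈ [0,1], r₁, r₂ ≥ 0 and t ≥ 0 in the common domain of definition, r(t,ω,θ, η r₁ + (1-η) r₂) ≥ η r(t,ω,θ,r₁) + (1-η) r(t,ω,θ,r₂). -/
open Set Real

/-! Writing `F r = r k_ρ(r) = max r ρ · max (r - ρ) 0 ^ 2`, a product of nonnegative nondecreasing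
convex functions, the equation reads `r' = r h(t) - F(r)` with `F` convex and nondecreasing on all
of `ℝ`. For `v = r₃ - (η r₁ + (1 - η) r₂)`, Jensen's inequality for `F`, and monotonicity of `F`
where `v < 0`, leave `v' ≥ h v ≥ M v` on `{v < 0}`, and a fencing argument keeps `v ≥ 0`. -/

lemma mul_max_sub_sq_eq_max_mul (ρ r : ℝ) :
    r * max (r - ρ) 0 ^ 2 = max r ρ * max (r - ρ) 0 ^ 2 := by
  rcases le_total r ρ with hr | hr
  · simp [max_eq_right (sub_nonpos.2 hr)]
  · rw [max_eq_left hr]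

section
variable {ρ : ℝ}

lemma monotone_max_sub_sq : Monotone fun r : ℝ => max (r - ρ) 0 ^ 2 := fun a b hab => by
  dsimp only
  gcongr

lemma convexOn_mul_max_sub_sq (hρ : 0 ≤ ρ) :
    ConvexOn ℝ univ fun r : ℝ => r * max (r - ρ) 0 ^ 2 := by
  simp_rw [mul_max_sub_sq_eq_max_mul ρ]
  have hmax : ConvexOn ℝ univ fun r : ℝ => max r ρ :=
    (convexOn_id convex_univ).sup (convexOn_const ρ convex_univ)
  have hpos : ConvexOn ℝ univ fun r : ℝ => max (r - ρ) 0 :=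
    ((convexOn_id convex_univ).sub (concaveOn_const ρ convex_univ)).sup
      (convexOn_const 0 convex_univ)
  exact hmax.mul (hpos.pow (fun r _ => le_max_right _ _) 2)
    (fun r _ => hρ.trans (le_max_right r ρ)) (fun r _ => by positivity)
    (((monotone_id.sup monotone_const).monovary monotone_max_sub_sq).monovaryOn univ)

lemma monotone_mul_max_sub_sq (hρ : 0 ≤ ρ) :
    Monotone fun r : ℝ => r * max (r - ρ) 0 ^ 2 := by
  simp_rw [mul_max_sub_sq_eq_max_mul ρ]
  exact (monotone_id.sup monotone_const).mul monotone_max_sub_sq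
    (fun r => hρ.trans (le_max_right r ρ)) (fun r => by positivity)

end

lemma nonneg_of_mul_le_deriv_of_neg {v v' : ℝ → ℝ} {a b L : ℝ}
    (hv : ContinuousOn v (Icc a b)) (hv' : ∀ x ∈ Ico a b, HasDerivWithinAt v (v' x) (Ici x) x)
    (ha : 0 ≤ v a) (hL : ∀ x ∈ Ico a b, v x < 0 → L * v x ≤ v' x) :
    ∀ ⦃x⦄, x ∈ Icc a b → 0 ≤ v x := by
  intro x hx
  -- Fence `-v` from above by `ε e^{(L+1)(t-a)}`, which grows strictly faster than `-v` can.
  have fence : ∀ ε > 0, -v x ≤ ε * exp ((L + 1) * (x - a)) := by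
    intro ε hε
    refine image_le_of_deriv_right_lt_deriv_boundary (f := fun t => -v t) (f' := fun t => -v' t)
      (B := fun t => ε * exp ((L + 1) * (t - a)))
      (B' := fun t => (L + 1) * (ε * exp ((L + 1) * (t - a)))) hv.neg (fun t ht => (hv' t ht).neg)
      (by simp only [sub_self, mul_zero, exp_zero, mul_one]; linarith) ?_ ?_ hx
    · intro t
      have := (((hasDerivAt_id t).sub_const a).const_mul (L + 1)).exp.const_mul ε
      exact this.congr_deriv (by simp only [id, mul_one]; ring)
    · intro t ht heq
      have hB : 0 < ε * exp ((L + 1) * (t - a)) := by positivity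
      have := hL t ht (by linarith)
      rw [← heq] at hB ⊢
      linarith
  refine neg_nonpos.1 (le_of_forall_pos_le_add fun ε hε => ?_)
  have := fence (ε * exp (-((L + 1) * (x - a)))) (by positivity)
  rwa [mul_assoc, ← exp_add, neg_add_cancel, exp_zero, mul_one, ← zero_add ε] at this

theorem comb_le_solution_of_convexOn_of_monotone {F h r₁ r₂ r₃ : ℝ → ℝ} {M η : ℝ}
    (hFc : ConvexOn ℝ univ F) (hFm : Monotone F) (hM : ∀ t, h t ≤ M) (hη : η ∈ Icc 0 1)
    (h₃0 : r₃ 0 = η * r₁ 0 + (1 - η) * r₂ 0)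
    (hode₁ : ∀ t, HasDerivAt r₁ (r₁ t * h t - F (r₁ t)) t)
    (hode₂ : ∀ t, HasDerivAt r₂ (r₂ t * h t - F (r₂ t)) t)
    (hode₃ : ∀ t, HasDerivAt r₃ (r₃ t * h t - F (r₃ t)) t) :
    ∀ t, 0 ≤ t → η * r₁ t + (1 - η) * r₂ t ≤ r₃ t := by
  obtain ⟨hη0, hη1⟩ := hη
  set y : ℝ → ℝ := fun t => η * r₁ t + (1 - η) * r₂ t
  have hv : ∀ t, HasDerivAt (fun t => r₃ t - y t) (r₃ t * h t - F (r₃ t)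
      - (η * (r₁ t * h t - F (r₁ t)) + (1 - η) * (r₂ t * h t - F (r₂ t)))) t := fun t =>
    (hode₃ t).sub (((hode₁ t).const_mul η).add ((hode₂ t).const_mul (1 - η)))
  intro T hT
  have := nonneg_of_mul_le_deriv_of_neg (a := 0) (b := T) (L := M)
    (fun t _ => (hv t).continuousAt.continuousWithinAt) (fun t _ => (hv t).hasDerivWithinAt)
    (by simp [y, h₃0]) ?_ ⟨hT, le_rfl⟩
  · simpa [y] using this
  intro t _ hneg
  have jensen : F (y t) ≤ η * F (r₁ t) + (1 - η) * F (r₂ t) := by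
    simpa using hFc.2 (mem_univ (r₁ t)) (mem_univ (r₂ t)) hη0 (sub_nonneg.2 hη1) (by ring)
  have mono : F (r₃ t) ≤ F (y t) := hFm (sub_neg.1 hneg).le
  have drift : M * (r₃ t - y t) ≤ h t * (r₃ t - y t) :=
    mul_le_mul_of_nonpos_right (hM t) hneg.le
  simp only [y] at jensen mono drift ⊢
  linarith

theorem stmt5_general (ρ : ℝ) (hρ : 0 < ρ) (k h : ℝ → ℝ)
    (hk : ∀ r : ℝ, k r = if r ≤ ρ then 0 else (r - ρ) ^ 2)
    (hhb : ∃ M, ∀ t, |h t| ≤ M)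
    (η : ℝ) (hη : η ∈ Set.Icc (0 : ℝ) 1)
    (r₁ r₂ r₃ : ℝ → ℝ)
    (h₃0 : r₃ 0 = η * r₁ 0 + (1 - η) * r₂ 0)
    (hode₁ : ∀ t, HasDerivAt r₁ (r₁ t * (h t - k (r₁ t))) t)
    (hode₂ : ∀ t, HasDerivAt r₂ (r₂ t * (h t - k (r₂ t))) t)
    (hode₃ : ∀ t, HasDerivAt r₃ (r₃ t * (h t - k (r₃ t))) t) :
    ∀ t : ℝ, 0 ≤ t → η * r₁ t + (1 - η) * r₂ t ≤ r₃ t := by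
  have hk' : k = fun r => max (r - ρ) 0 ^ 2 := funext fun r => by
    rw [hk]
    split_ifs with hr
    · simp [hr]
    · rw [max_eq_left (by linarith)]
  subst hk'
  obtain ⟨M, hM⟩ := hhb
  exact comb_le_solution_of_convexOn_of_monotone (convexOn_mul_max_sub_sq hρ.le)
    (monotone_mul_max_sub_sq hρ.le) (fun t => (le_abs_self _).trans (hM t)) hη h₃0
    (fun t => (hode₁ t).congr_deriv (mul_sub _ _ _)) (fun t => (hode₂ t).congr_deriv (mul_sub _ _ _))
    (fun t => (hode₃ t).congr_deriv (mul_sub _ _ _))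

/-- Concavity in the initial condition of the solution map of
`r' = r (h(t) - k_ρ(r))`: if `r₃(0) = η r₁(0) + (1-η) r₂(0)` with `η ∈ [0,1]`
and nonnegative initial data, then `r₃(t) ≥ η r₁(t) + (1-η) r₂(t)` for `t ≥ 0`. -/
theorem stmt5 (ρ : ℝ) (hρ : 0 < ρ) (k h : ℝ → ℝ)
    (hk : ∀ r : ℝ, k r = if r ≤ ρ then 0 else (r - ρ) ^ 2)
    (hh : Continuous h) (hhb : ∃ M, ∀ t, |h t| ≤ M)
    (η : ℝ) (hη : η ∈ Set.Icc (0 : ℝ) 1)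
    (r₁ r₂ r₃ : ℝ → ℝ)
    (h₁0 : 0 ≤ r₁ 0) (h₂0 : 0 ≤ r₂ 0)
    (h₃0 : r₃ 0 = η * r₁ 0 + (1 - η) * r₂ 0)
    (hode₁ : ∀ t, HasDerivAt r₁ (r₁ t * (h t - k (r₁ t))) t)
    (hode₂ : ∀ t, HasDerivAt r₂ (r₂ t * (h t - k (r₂ t))) t)
    (hode₃ : ∀ t, HasDerivAt r₃ (r₃ t * (h t - k (r₃ t))) t) :
    ∀ t : ℝ, 0 ≤ t → η * r₁ t + (1 - η) * r₂ t ≤ r₃ t :=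
  stmt5_general ρ hρ k h hk hhb η hη r₁ r₂ r₃ h₃0 hode₁ hode₂ hode₃
end

section
/- Let β̃ : Ω×ℙ → [0, r_ρ] be the upper semicontinuous equilibrium bounding the attractor, and suppose β̃(ω,θ) ≥ β₀ > 0 for all (ω,θ). Then β̃ is uniformly stable: for every ε > 0, taking δ(ε) = ε β₀ / r_ρ, if |β̃(ω,θ) − r₀| ≤ δ(ε) then |β̃(σ̃(t,ω,θ)) − r(t,ω,θ,r₀)| ≤ ε for all t ≥ 0. -/
/-!
Write `r₀ = η β̃(x)`. Monotonicity together with the sub- and superhomogeneity of the solution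
operator traps `R(t, x, r₀)` between `β̃(σ̃(t, x))` and `η β̃(σ̃(t, x))`, so the error at time `t`
is at most `|1 - η| β̃(σ̃(t, x)) = |β̃(x) - r₀| β̃(σ̃(t, x)) / β̃(x) ≤ δ r_ρ / β₀ = ε`.
-/

open Set

section Sandwich

variable {f : ℝ → ℝ} {b b' r : ℝ}

lemma sub_apply_le_of_le (hb : 0 < b) (hsub : ∀ η ∈ Icc (0 : ℝ) 1, η * b' ≤ f (η * b))
    (hr : 0 ≤ r) (hrb : r ≤ b) : b' - f r ≤ (b - r) / b * b' := by
  have h := hsub (r / b) ⟨div_nonneg hr hb.le, div_le_one_of_le₀ hrb hb.le⟩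
  rw [div_mul_cancel₀ r hb.ne'] at h
  have hsplit : (b - r) / b * b' = b' - r / b * b' := by field_simp
  linarith

lemma apply_sub_le_of_le (hb : 0 < b) (hsup : ∀ η, 1 ≤ η → f (η * b) ≤ η * b')
    (hbr : b ≤ r) : f r - b' ≤ (r - b) / b * b' := by
  have h := hsup (r / b) ((one_le_div hb).2 hbr)
  rw [div_mul_cancel₀ r hb.ne'] at h
  have hsplit : (r - b) / b * b' = r / b * b' - b' := by field_simp
  linarith

lemma abs_sub_apply_le (hb : 0 < b) (hfb : f b = b') (hmono : MonotoneOn f (Ici 0))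
    (hsub : ∀ η ∈ Icc (0 : ℝ) 1, η * b' ≤ f (η * b))
    (hsup : ∀ η, 1 ≤ η → f (η * b) ≤ η * b') (hr : 0 ≤ r) :
    |b' - f r| ≤ |b - r| / b * b' := by
  rcases le_total r b with hrb | hbr
  · have hfr : f r ≤ b' := hfb ▸ hmono hr hb.le hrb
    rw [abs_of_nonneg (sub_nonneg.2 hfr), abs_of_nonneg (sub_nonneg.2 hrb)]
    exact sub_apply_le_of_le hb hsub hr hrb
  · have hfr : b' ≤ f r := hfb ▸ hmono (mem_Ici.2 hb.le) (mem_Ici.2 (hb.le.trans hbr)) hbr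
    rw [abs_sub_comm, abs_of_nonneg (sub_nonneg.2 hfr), abs_sub_comm,
      abs_of_nonneg (sub_nonneg.2 hbr)]
    exact apply_sub_le_of_le hb hsup hbr

end Sandwich

/-- Uniform stability of the equilibrium `β̃` bounding the attractor: if
`β₀ ≤ β̃ ≤ r_ρ` and `β̃` is an equilibrium of the monotone concave solution
operator `R`, then for every `ε > 0`, taking `δ(ε) = ε β₀ / r_ρ`, an initial
datum `r₀ ≥ 0` with `|β̃(x) - r₀| ≤ δ(ε)` satisfies
`|β̃(σ̃(t,x)) - R(t,x,r₀)| ≤ ε` for all `t ≥ 0`. -/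
theorem stmt8 {X : Type*} (σ : ℝ → X → X) (R : ℝ → X → ℝ → ℝ)
    (rρ β₀ : ℝ) (hrρ : 0 < rρ) (hβ₀ : 0 < β₀)
    (β : X → ℝ)
    (hβub : ∀ x, β x ≤ rρ) (hβlb : ∀ x, β₀ ≤ β x)
    (heq : ∀ (t : ℝ) (x : X), β (σ t x) = R t x (β x))
    (hmono : ∀ t : ℝ, 0 ≤ t → ∀ (x : X) (r₁ r₂ : ℝ), 0 ≤ r₁ → r₁ ≤ r₂ →
      R t x r₁ ≤ R t x r₂)
    (hsub : ∀ η : ℝ, η ∈ Set.Icc (0 : ℝ) 1 → ∀ t : ℝ, 0 ≤ t → ∀ x : X,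
      η * β (σ t x) ≤ R t x (η * β x))
    (hsup : ∀ η : ℝ, 1 ≤ η → ∀ t : ℝ, 0 ≤ t → ∀ x : X,
      R t x (η * β x) ≤ η * β (σ t x)) :
    ∀ ε : ℝ, 0 < ε → ∀ (x : X) (r₀ : ℝ), 0 ≤ r₀ → |β x - r₀| ≤ ε * β₀ / rρ →
      ∀ t : ℝ, 0 ≤ t → |β (σ t x) - R t x r₀| ≤ ε := by
  intro ε hε x r₀ hr₀ hδ t ht
  have hβx : 0 < β x := hβ₀.trans_le (hβlb x)
  have hβσ : 0 < β (σ t x) := hβ₀.trans_le (hβlb _)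
  calc |β (σ t x) - R t x r₀| ≤ |β x - r₀| / β x * β (σ t x) :=
        abs_sub_apply_le hβx (heq t x).symm (fun r₁ hr₁ r₂ _ h ↦ hmono t ht x r₁ r₂ hr₁ h)
          (fun η hη ↦ hsub η hη t ht x) (fun η hη ↦ hsup η hη t ht x) hr₀
    _ ≤ ε * β₀ / rρ / β₀ * rρ := by gcongr; exacts [hβlb x, hβub _]
    _ = ε := by field_simp
end

section
/- Fix (ω,θ) and let β̃(ω,θ) be the supremum of all r₀ ≥ 0 such that the solution r(t,ω,θ,r₀) of r' = r(g(σ̃(t,ω,θ)) − k_ρ(r)) is globally defined and bounded. Then β̃(ω,θ) > 0 if and only if the solution r_l(t,ω,θ,1) of the linear equation r' = r g(σ̃(t,ω,θ)) is bounded on (−∞, 0]. -/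
/-!
Solutions of the linear equation `r' = r a(t)` are `r t = r 0 * exp (∫ a)`. Since `k_ρ ≥ 0`, a
solution `r` of the dissipative equation with `r 0 > 0` dominates `r 0 * r_l` backwards in time,
so a bounded one bounds `r_l` on `(-∞, 0]`. Conversely, if `r_l ≤ M` there, then `(ρ / M) r_l`
stays in `[0, ρ]`, where `k_ρ = 0`, so it solves the dissipative equation for `t ≤ 0`. Continued
forward by Picard–Lindelöf, it cannot leave `[0, U]`, where `U = ρ + √A + 1` with `|g| ≤ A` is a
level above which `k_ρ ≥ g + 1`. The same level makes the supremum finite: above `U` a solution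
decreases at rate at least `1`, so a solution that is ever above `U` is unbounded in the past.
-/

open Set Real
open scoped NNReal

theorem eq_mul_exp_integral_of_hasDerivAt {r a : ℝ → ℝ} (ha : Continuous a)
    (hr : ∀ t, HasDerivAt r (r t * a t) t) (t₀ t : ℝ) :
    r t = r t₀ * exp (∫ s in t₀..t, a s) := by
  set A : ℝ → ℝ := fun t => ∫ s in t₀..t, a s
  have hA : ∀ t, HasDerivAt A (a t) t := fun t => (ha.integral_hasStrictDerivAt t₀ t).hasDerivAt
  have hderiv : ∀ t, HasDerivAt (fun t => r t * exp (-A t)) 0 t := fun t =>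
    ((hr t).mul (hA t).neg.exp).congr_deriv (by simp only [Pi.neg_apply]; ring)
  have hconst : r t * exp (-A t) = r t₀ := by
    simpa [A] using is_const_of_deriv_eq_zero (fun t => (hderiv t).differentiableAt)
      (fun t => (hderiv t).deriv) t t₀
  rw [← hconst, mul_assoc, ← exp_add, neg_add_cancel, exp_zero, mul_one]

theorem mul_le_mul_of_hasDerivAt_mul_of_le {r q a b : ℝ → ℝ} (ha : Continuous a)
    (hb : Continuous b) (hab : ∀ t, a t ≤ b t) (hr : ∀ t, HasDerivAt r (r t * a t) t)
    (hq : ∀ t, HasDerivAt q (q t * b t) t) {t₀ t : ℝ} (hr₀ : 0 ≤ r t₀) (hq₀ : 0 ≤ q t₀)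
    (ht : t ≤ t₀) : r t₀ * q t ≤ q t₀ * r t := by
  have hint : ∫ s in t₀..t, b s ≤ ∫ s in t₀..t, a s := by
    rw [intervalIntegral.integral_symm, intervalIntegral.integral_symm t]
    exact neg_le_neg (intervalIntegral.integral_mono_on ht (ha.intervalIntegrable _ _)
      (hb.intervalIntegrable _ _) fun s _ => hab s)
  rw [eq_mul_exp_integral_of_hasDerivAt ha hr t₀ t, eq_mul_exp_integral_of_hasDerivAt hb hq t₀ t]
  calc r t₀ * (q t₀ * exp (∫ s in t₀..t, b s))
      = r t₀ * q t₀ * exp (∫ s in t₀..t, b s) := by ring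
    _ ≤ r t₀ * q t₀ * exp (∫ s in t₀..t, a s) := by gcongr
    _ = q t₀ * (r t₀ * exp (∫ s in t₀..t, a s)) := by ring

theorem antitoneOn_Icc_of_hasDerivAt_nonpos {f f' : ℝ → ℝ} {a b : ℝ}
    (hf : ∀ t ∈ Icc a b, HasDerivAt f (f' t) t) (hf' : ∀ t ∈ Ioo a b, f' t ≤ 0) :
    AntitoneOn f (Icc a b) :=
  antitoneOn_of_hasDerivWithinAt_nonpos (convex_Icc a b)
    (fun t ht => (hf t ht).continuousAt.continuousWithinAt)
    (fun t ht => (hf t (interior_subset ht)).hasDerivWithinAt)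
    (fun t ht => hf' t (by rwa [interior_Icc] at ht))

theorem le_of_hasDerivAt_nonpos_above {f f' : ℝ → ℝ} {a b U : ℝ} (hab : a ≤ b)
    (hf : ∀ t ∈ Icc a b, HasDerivAt f (f' t) t) (hf' : ∀ t ∈ Ioo a b, U < f t → f' t ≤ 0)
    (ha : f a ≤ U) : f b ≤ U := by
  by_contra! hb
  set A := Icc a b ∩ f ⁻¹' Iic U
  have hAbdd : BddAbove A := bddAbove_Icc.mono inter_subset_left
  have hA : sSup A ∈ A := by
    refine IsClosed.csSup_mem ?_ ⟨a, left_mem_Icc.2 hab, ha⟩ hAbdd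
    exact ContinuousOn.preimage_isClosed_of_isClosed
      (fun t ht => (hf t ht).continuousAt.continuousWithinAt) isClosed_Icc isClosed_Iic
  obtain ⟨⟨has, hsb⟩, hfs⟩ := hA
  -- past the last time `f ≤ U`, the function stays above `U` and hence cannot increase
  have hanti : AntitoneOn f (Icc (sSup A) b) := by
    refine antitoneOn_Icc_of_hasDerivAt_nonpos (fun t ht => hf t ⟨has.trans ht.1, ht.2⟩)
      fun t ht => hf' t ⟨has.trans_lt ht.1, ht.2⟩ ?_
    by_contra! h
    exact (le_csSup hAbdd ⟨⟨has.trans ht.1.le, ht.2.le⟩, h⟩).not_gt ht.1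
  exact hb.not_ge ((hanti ⟨le_rfl, hsb⟩ ⟨hsb, le_rfl⟩ hsb).trans hfs)

theorem exists_forall_hasDerivAt_of_lipschitzWith_of_norm_le {E : Type*} [NormedAddCommGroup E]
    [NormedSpace ℝ E] [CompleteSpace E] {f : ℝ → E → E} {K : ℝ≥0} {C : ℝ}
    (hlip : ∀ t, LipschitzWith K (f t)) (hcont : ∀ x, Continuous (f · x))
    (hbdd : ∀ t x, ‖f t x‖ ≤ C) (t₀ : ℝ) (x₀ : E) :
    ∃ α : ℝ → E, α t₀ = x₀ ∧ ∀ t, HasDerivAt α (f t (α t)) t := by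
  have hC : 0 ≤ C := (norm_nonneg _).trans (hbdd t₀ x₀)
  set I : ℕ → Set ℝ := fun n => Ioo (t₀ - (n + 1)) (t₀ + (n + 1))
  have hmem : ∀ n, t₀ ∈ I n := fun n => ⟨by linarith, by linarith⟩
  have hloc : ∀ n : ℕ, ∃ α : ℝ → E, α t₀ = x₀ ∧ ∀ t ∈ I n, HasDerivAt α (f t (α t)) t := by
    intro n
    have hpl : IsPicardLindelof f (tmin := t₀ - (n + 1)) (tmax := t₀ + (n + 1))
        ⟨t₀, Ioo_subset_Icc_self (hmem n)⟩ x₀ ⟨C * (n + 1), by positivity⟩ 0 ⟨C, hC⟩ K :=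
      { lipschitzOnWith := fun t _ => (hlip t).lipschitzOnWith
        continuousOn := fun x _ => (hcont x).continuousOn
        norm_le := fun t _ x _ => hbdd t x
        mul_max_le := by
          simp only [add_sub_cancel_left, sub_sub_cancel, max_self, NNReal.coe_zero, sub_zero]
          rfl }
    obtain ⟨α, hα₀, hα⟩ := hpl.exists_eq_forall_mem_Icc_hasDerivWithinAt₀
    exact ⟨α, hα₀, fun t ht => (hα t (Ioo_subset_Icc_self ht)).hasDerivAt (Icc_mem_nhds ht.1 ht.2)⟩
  choose α hα₀ hα using hloc
  -- local solutions agree on their common interval of existence, so they glue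
  have hagree : ∀ m n, m ≤ n → EqOn (α m) (α n) (I m) := fun m n hmn => by
    have hsub : I m ⊆ I n := Ioo_subset_Ioo (by gcongr) (by gcongr)
    exact ODE_solution_unique_of_mem_Ioo (s := fun _ => univ)
      (fun t _ => (hlip t).lipschitzOnWith) (hmem m) (fun t ht => ⟨hα m t ht, trivial⟩)
      (fun t ht => ⟨hα n t (hsub ht), trivial⟩) (by rw [hα₀, hα₀])
  set N : ℝ → ℕ := fun t => ⌈|t - t₀|⌉₊
  have hN : ∀ t, t ∈ I (N t) := fun t => by
    obtain ⟨h₁, h₂⟩ := abs_sub_lt_iff.1 ((Nat.le_ceil |t - t₀|).trans_lt (lt_add_one _))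
    exact ⟨by linarith, by linarith⟩
  refine ⟨fun t => α (N t) t, hα₀ _, fun t => (hα _ t (hN t)).congr_of_eventuallyEq ?_⟩
  filter_upwards [isOpen_Ioo.mem_nhds (hN t)] with s hs
  rcases le_total (N s) (N t) with h | h
  · exact hagree _ _ h (hN s)
  · exact (hagree _ _ h hs).symm

theorem LipschitzOnWith.lipschitzWith_comp_projIcc {α : Type*} [PseudoEMetricSpace α]
    {f : ℝ → α} {K : ℝ≥0} {a b : ℝ} (hf : LipschitzOnWith K f (Icc a b)) (hab : a ≤ b) :
    LipschitzWith K fun y => f (max a (min b y)) := by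
  have h := hf.to_restrict.comp (LipschitzWith.projIcc hab)
  rwa [mul_one] at h

theorem mem_Icc_of_hasDerivAt_projIcc {V : ℝ → ℝ → ℝ} {a b : ℝ} (ha : ∀ t, 0 ≤ V t a)
    (hb : ∀ t, V t b ≤ 0) {r : ℝ → ℝ} (hr : ∀ t, HasDerivAt r (V t (max a (min b (r t)))) t)
    {t₀ t : ℝ} (ht : t₀ ≤ t) (h₀ : r t₀ ∈ Icc a b) : r t ∈ Icc a b := by
  have hab : a ≤ b := h₀.1.trans h₀.2
  constructor
  · have := le_of_hasDerivAt_nonpos_above (f := fun s => -r s) (U := -a) ht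
      (fun s _ => (hr s).neg) (fun s _ hs => ?_) (neg_le_neg h₀.1)
    · exact neg_le_neg_iff.1 this
    · rw [max_eq_left (min_le_of_right_le (neg_lt_neg_iff.1 hs).le), neg_nonpos]
      exact ha s
  · refine le_of_hasDerivAt_nonpos_above ht (fun s _ => hr s) (fun s _ hs => ?_) h₀.2
    rw [min_eq_left hs.le, max_eq_right hab]
    exact hb s

theorem lipschitzOnWith_mul_sub {k : ℝ → ℝ} {K : ℝ≥0} {U A c : ℝ}
    (hk : LipschitzOnWith K k (Icc 0 U)) (hk0 : k 0 = 0) (hc : |c| ≤ A) :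
    LipschitzOnWith (A + 2 * U * K).toNNReal (fun y => y * (c - k y)) (Icc 0 U) := by
  refine LipschitzOnWith.of_dist_le' fun y hy z hz => ?_
  have hU : 0 ≤ U := hy.1.trans hy.2
  have hky : |k y| ≤ K * U := by
    have h := hk.dist_le_mul y hy 0 ⟨le_rfl, hU⟩
    rw [hk0, Real.dist_eq, Real.dist_eq, sub_zero, sub_zero, abs_of_nonneg hy.1] at h
    exact h.trans (by gcongr; exact hy.2)
  have hkyz : |k y - k z| ≤ K * |y - z| := by
    simpa only [Real.dist_eq] using hk.dist_le_mul y hy z hz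
  have hz : |z| ≤ U := abs_le.2 ⟨by linarith [hz.1], hz.2⟩
  rw [Real.dist_eq, Real.dist_eq]
  calc |y * (c - k y) - z * (c - k z)| = |(y - z) * c - (y - z) * k y - z * (k y - k z)| := by
        congr 1; ring
    _ ≤ |y - z| * |c| + |y - z| * |k y| + |z| * |k y - k z| := by
        rw [← abs_mul, ← abs_mul, ← abs_mul]
        exact (abs_sub _ _).trans (add_le_add_left (abs_sub _ _) _)
    _ ≤ |y - z| * A + |y - z| * (K * U) + U * (K * |y - z|) := by gcongr
    _ = (A + 2 * U * K) * |y - z| := by ring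

/-- The dissipation `k_ρ` of the paper. -/
def quadraticCutoff (ρ r : ℝ) : ℝ := max (r - ρ) 0 ^ 2

theorem quadraticCutoff_nonneg (ρ r : ℝ) : 0 ≤ quadraticCutoff ρ r := sq_nonneg _

theorem quadraticCutoff_of_le {ρ r : ℝ} (h : r ≤ ρ) : quadraticCutoff ρ r = 0 := by
  simp [quadraticCutoff, h]

theorem continuous_quadraticCutoff (ρ : ℝ) : Continuous (quadraticCutoff ρ) := by
  unfold quadraticCutoff; fun_prop

theorem lipschitzOnWith_quadraticCutoff {ρ : ℝ} (hρ : 0 ≤ ρ) (U : ℝ) :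
    LipschitzOnWith (2 * U).toNNReal (quadraticCutoff ρ) (Icc 0 U) := by
  refine LipschitzOnWith.of_dist_le' fun y hy z hz => ?_
  have hm : ∀ x ∈ Icc 0 U, max (x - ρ) 0 ∈ Icc 0 U := fun x hx =>
    ⟨le_max_right _ _, max_le (by linarith [hx.2]) (hx.1.trans hx.2)⟩
  have hyz : |max (y - ρ) 0 - max (z - ρ) 0| ≤ |y - z| := by
    simpa using abs_max_sub_max_le_abs (y - ρ) (z - ρ) 0
  rw [Real.dist_eq, Real.dist_eq, quadraticCutoff, quadraticCutoff, sq_sub_sq, abs_mul]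
  refine mul_le_mul ?_ hyz (abs_nonneg _) (by linarith [(hm y hy).1, (hm y hy).2])
  rw [abs_of_nonneg (add_nonneg (hm y hy).1 (hm z hz).1)]
  linarith [(hm y hy).2, (hm z hz).2]

theorem add_one_le_quadraticCutoff {ρ r A : ℝ} (hA : 0 ≤ A) (h : ρ + √A + 1 ≤ r) :
    A + 1 ≤ quadraticCutoff ρ r := by
  have hs : 0 ≤ √A := sqrt_nonneg A
  rw [quadraticCutoff, max_eq_left (by linarith)]
  nlinarith [sq_sqrt hA]

theorem le_of_hasDerivAt_mul_sub_of_abs_le {g k r : ℝ → ℝ} {U M : ℝ} (hU : 1 ≤ U)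
    (hgk : ∀ t y, U ≤ y → g t - k y ≤ -1) (hr : ∀ t, HasDerivAt r (r t * (g t - k (r t))) t)
    (hM : ∀ t, |r t| ≤ M) (t₀ : ℝ) : r t₀ ≤ U := by
  by_contra! h
  have hdecr : ∀ t, U ≤ r t → r t * (g t - k (r t)) ≤ -1 := fun t ht => by
    nlinarith [hgk t (r t) ht]
  have habove : ∀ t ≤ t₀, U < r t := fun t ht => by
    by_contra! h'
    exact h.not_ge (le_of_hasDerivAt_nonpos_above ht (fun s _ => hr s)
      (fun s _ hs => (hdecr s hs.le).trans (by norm_num)) h')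
  have hM0 : 0 ≤ M := (abs_nonneg _).trans (hM t₀)
  have hanti := antitoneOn_Icc_of_hasDerivAt_nonpos (f := fun s => r s + s) (a := t₀ - M) (b := t₀)
    (fun s _ => (hr s).add (hasDerivAt_id s))
    (fun s hs => by linarith [hdecr s (habove s hs.2.le).le])
  have := hanti ⟨le_rfl, by linarith⟩ ⟨by linarith, le_rfl⟩ (by linarith)
  linarith [le_abs_self (r (t₀ - M)), hM (t₀ - M)]

theorem exists_hasDerivAt_mul_sub_mem_Icc {g k q : ℝ → ℝ} {ρ U A : ℝ} {K : ℝ≥0}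
    (hg : Continuous g) (hgA : ∀ t, |g t| ≤ A) (hk : LipschitzOnWith K k (Icc 0 U))
    (hρU : ρ ≤ U) (hk0 : ∀ y ∈ Icc 0 ρ, k y = 0) (hkU : ∀ t, g t ≤ k U)
    (hq : ∀ t, HasDerivAt q (q t * g t) t) (hqρ : ∀ t ≤ 0, q t ∈ Icc 0 ρ) :
    ∃ r : ℝ → ℝ, r 0 = q 0 ∧ (∀ t, HasDerivAt r (r t * (g t - k (r t))) t) ∧
      ∀ t, r t ∈ Icc 0 U := by
  have hρ : 0 ≤ ρ := (hqρ 0 le_rfl).1.trans (hqρ 0 le_rfl).2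
  have hU : 0 ≤ U := hρ.trans hρU
  have hqU : ∀ t ≤ 0, q t ∈ Icc 0 U := fun t ht => ⟨(hqρ t ht).1, (hqρ t ht).2.trans hρU⟩
  set V : ℝ → ℝ → ℝ := fun t y => y * (g t - k y)
  -- clamping to `[0, U]` makes the field globally Lipschitz and bounded; the solution never
  -- leaves `[0, U]`, so the clamp is invisible along it
  set F : ℝ → ℝ → ℝ := fun t y => V t (max 0 (min U y))
  have hFV : ∀ t, ∀ y ∈ Icc 0 U, F t y = V t y := fun t y hy => by
    simp only [F, min_eq_right hy.2, max_eq_right hy.1]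
  have hVlip : ∀ t, LipschitzOnWith (A + 2 * U * K).toNNReal (V t) (Icc 0 U) := fun t =>
    lipschitzOnWith_mul_sub hk (hk0 0 ⟨le_rfl, hρ⟩) (hgA t)
  have hFlip : ∀ t, LipschitzWith (A + 2 * U * K).toNNReal (F t) := fun t =>
    (hVlip t).lipschitzWith_comp_projIcc hU
  have hFbdd : ∀ t y, ‖F t y‖ ≤ (A + 2 * U * K).toNNReal * U := fun t y => by
    have hP : max 0 (min U y) ∈ Icc 0 U := ⟨le_max_left _ _, max_le hU (min_le_left _ _)⟩
    have h := (hVlip t).dist_le_mul _ hP 0 ⟨le_rfl, hU⟩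
    simp only [V, zero_mul, dist_zero_right, Real.norm_eq_abs, abs_of_nonneg hP.1] at h
    exact h.trans (by gcongr; exact hP.2)
  obtain ⟨r, hr0, hr⟩ := exists_forall_hasDerivAt_of_lipschitzWith_of_norm_le hFlip
    (fun y => by fun_prop) hFbdd 0 (q 0)
  have hqF : ∀ t ≤ 0, HasDerivAt q (F t (q t)) t := fun t ht => by
    rw [hFV t _ (hqU t ht)]
    simpa only [V, hk0 _ (hqρ t ht), sub_zero] using hq t
  have hrq : ∀ t ≤ 0, r t = q t := fun t ht =>
    ODE_solution_unique_of_mem_Icc_left (s := fun _ => univ)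
      (fun s _ => (hFlip s).lipschitzOnWith) (HasDerivAt.continuousOn fun s _ => hr s)
      (fun s _ => (hr s).hasDerivWithinAt) (fun _ _ => trivial)
      (HasDerivAt.continuousOn fun s hs => hqF s hs.2) (fun s hs => (hqF s hs.2).hasDerivWithinAt)
      (fun _ _ => trivial) hr0 ⟨le_rfl, ht⟩
  have hrU : ∀ t, r t ∈ Icc 0 U := fun t => by
    rcases le_total t 0 with ht | ht
    · exact hrq t ht ▸ hqU t ht
    · exact mem_Icc_of_hasDerivAt_projIcc (V := V) (fun s => by simp [V])
        (fun s => mul_nonpos_of_nonneg_of_nonpos hU (sub_nonpos.2 (hkU s))) hr ht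
        (hr0 ▸ hqU 0 le_rfl)
  refine ⟨r, hr0, fun t => ?_, hrU⟩
  simpa only [hFV t _ (hrU t)] using hr t

/-- `β̃` is the supremum of this set. -/
def boundedSolutionInits (g k : ℝ → ℝ) : Set ℝ :=
  {r₀ | 0 ≤ r₀ ∧ ∃ r : ℝ → ℝ, r 0 = r₀ ∧ (∀ t, HasDerivAt r (r t * (g t - k (r t))) t) ∧
    ∃ M, ∀ t, |r t| ≤ M}

theorem bddAbove_boundedSolutionInits {g k : ℝ → ℝ} {U : ℝ} (hU : 1 ≤ U)
    (hgk : ∀ t y, U ≤ y → g t - k y ≤ -1) : BddAbove (boundedSolutionInits g k) :=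
  ⟨U, fun _ ⟨_, _, hr0, hr, _, hM⟩ => hr0 ▸ le_of_hasDerivAt_mul_sub_of_abs_le hU hgk hr hM 0⟩

theorem exists_forall_le_of_mem_boundedSolutionInits {g k q : ℝ → ℝ} (hg : Continuous g)
    (hk : Continuous k) (hk0 : ∀ y, 0 ≤ k y) (hq : ∀ t, HasDerivAt q (q t * g t) t)
    (hq0 : q 0 = 1) {x : ℝ} (hx : x ∈ boundedSolutionInits g k) (hxpos : 0 < x) :
    ∃ M, ∀ t ≤ 0, q t ≤ M := by
  obtain ⟨-, r, hr0, hr, M, hM⟩ := hx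
  have hrcont : Continuous r := continuous_iff_continuousAt.2 fun t => (hr t).continuousAt
  refine ⟨M / x, fun t ht => (le_div_iff₀ hxpos).2 ?_⟩
  have hcmp := mul_le_mul_of_hasDerivAt_mul_of_le (hg.sub (hk.comp hrcont)) hg
    (fun t => sub_le_self _ (hk0 _)) hr hq (hr0 ▸ hxpos.le) (hq0 ▸ zero_le_one) ht
  rw [hr0, hq0, one_mul] at hcmp
  linarith [le_abs_self (r t), hM t]

theorem exists_pos_mem_boundedSolutionInits {g k q : ℝ → ℝ} {ρ U A M : ℝ} {K : ℝ≥0}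
    (hg : Continuous g) (hgA : ∀ t, |g t| ≤ A) (hk : LipschitzOnWith K k (Icc 0 U))
    (hρ : 0 < ρ) (hρU : ρ ≤ U) (hk0 : ∀ y ∈ Icc 0 ρ, k y = 0) (hkU : ∀ t, g t ≤ k U)
    (hq : ∀ t, HasDerivAt q (q t * g t) t) (hq0 : q 0 = 1) (hqM : ∀ t ≤ 0, q t ≤ M) :
    ∃ c > 0, c ∈ boundedSolutionInits g k := by
  have hM : 0 < M := zero_lt_one.trans_le (hq0 ▸ hqM 0 le_rfl)
  have hq_pos : ∀ t, 0 < q t := fun t => by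
    rw [eq_mul_exp_integral_of_hasDerivAt hg hq 0 t, hq0, one_mul]
    exact exp_pos _
  -- scaled by `ρ / M`, the linear solution stays in `[0, ρ]` in the past, where `k` vanishes
  set c := ρ / M
  have hc : 0 < c := div_pos hρ hM
  have hcq : ∀ t ≤ 0, c * q t ∈ Icc 0 ρ := fun t ht =>
    ⟨(mul_pos hc (hq_pos t)).le, by
      calc c * q t ≤ c * M := by gcongr; exact hqM t ht
        _ = ρ := div_mul_cancel₀ ρ hM.ne'⟩
  obtain ⟨r, hr0, hr, hrU⟩ := exists_hasDerivAt_mul_sub_mem_Icc (q := fun t => c * q t) hg hgA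
    hk hρU hk0 hkU (fun t => by simpa only [mul_assoc] using (hq t).const_mul c) hcq
  refine ⟨c, hc, hc.le, r, by rw [hr0, hq0, mul_one], hr, U, fun t => ?_⟩
  exact abs_le.2 ⟨by linarith [(hrU t).1, (hrU t).2], (hrU t).2⟩

/-- For fixed `(ω,θ)`, let `β̃(ω,θ)` be the supremum of the initial data `r₀ ≥ 0`
whose solution of the dissipative equation `r' = r (g(t) - k_ρ(r))` is globally
defined and bounded. Then `β̃(ω,θ) > 0` if and only if the solution `r_l(t) `
of the linear equation `r' = r g(t)` with `r_l(0) = 1` is bounded on `(-∞, 0]`.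
Here `g(t) = g(σ̃(t,ω,θ))` is continuous and bounded. -/
theorem stmt9 (ρ : ℝ) (hρ : ρ ∈ Set.Ioc (0 : ℝ) 1) (k g : ℝ → ℝ)
    (hk : ∀ r : ℝ, k r = if r ≤ ρ then 0 else (r - ρ) ^ 2)
    (hg : Continuous g) (hgb : ∃ M, ∀ t, |g t| ≤ M)
    (rl : ℝ → ℝ) (hrl0 : rl 0 = 1)
    (hrl : ∀ t, HasDerivAt rl (rl t * g t) t)
    (β : ℝ)
    (hβ : β = sSup {r₀ : ℝ | 0 ≤ r₀ ∧ ∃ r : ℝ → ℝ, r 0 = r₀ ∧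
      (∀ t, HasDerivAt r (r t * (g t - k (r t))) t) ∧ ∃ M, ∀ t, |r t| ≤ M}) :
    0 < β ↔ ∃ M, ∀ t ≤ (0 : ℝ), rl t ≤ M := by
  obtain ⟨A, hgA⟩ := hgb
  obtain rfl : k = quadraticCutoff ρ := funext fun r => by
    rw [hk, quadraticCutoff]
    split_ifs with h
    · simp [h]
    · rw [max_eq_left (by linarith [not_le.1 h])]
  change β = sSup (boundedSolutionInits g (quadraticCutoff ρ)) at hβ
  subst hβ
  constructor
  · intro hβ
    obtain ⟨x, hx, hxpos⟩ : ∃ x ∈ boundedSolutionInits g (quadraticCutoff ρ), 0 < x := by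
      by_contra! h
      exact hβ.not_ge (Real.sSup_nonpos h)
    exact exists_forall_le_of_mem_boundedSolutionInits hg (continuous_quadraticCutoff ρ)
      (quadraticCutoff_nonneg ρ) hrl hrl0 hx hxpos
  · rintro ⟨M, hM⟩
    have hA : 0 ≤ A := (abs_nonneg _).trans (hgA 0)
    set U := ρ + √A + 1
    have hgk : ∀ t y, U ≤ y → g t - quadraticCutoff ρ y ≤ -1 := fun t y hy => by
      linarith [(abs_le.1 (hgA t)).2, add_one_le_quadraticCutoff hA hy]
    obtain ⟨c, hc, hcS⟩ := exists_pos_mem_boundedSolutionInits hg hgA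
      (lipschitzOnWith_quadraticCutoff hρ.1.le U) hρ.1 (by linarith [sqrt_nonneg A])
      (fun y hy => quadraticCutoff_of_le hy.2) (fun t => by linarith [hgk t U le_rfl]) hrl hrl0 hM
    exact hc.trans_le (le_csSup (bddAbove_boundedSolutionInits
      (by linarith [hρ.1, sqrt_nonneg A]) hgk) hcS)
end

section
/- Let e : Ω → ℝ be continuous with ∫ e dm = 0 over a minimal uniquely ergodic flow, and suppose that for a.e. ω one has sup_{t∈ℝ} ∫₀ᵗ e(ω·s) ds < ∞ while e admits no continuous primitive. Then there exist a measurable function h_e : Ω → (−∞,0] and a σ-invariant full-measure set Ω^e such that for all ω ∈ Ω^e: h_e(ω·t) − h_e(ω) = ∫₀ᵗ e(ω·s) ds for all t, sup_{t∈ℝ} h_e(ω·t) < ∞, and inf_{t≤0} h_e(ω·t) = inf_{t≥0} h_e(ω·t) = −∞. -/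
/-!
The cocycle `F ω t = ∫₀ᵗ e(ω·s) ds` defines a skew-product flow
`(ω, r) ↦ (ω·t, r + F ω t)` on `Ω × ℝ`. If `F ω₀` is bounded on a half-line, the closure of a
half-orbit of `(ω₀, 0)` is compact, so it contains a minimal compact forward-invariant set `M`
(Gottschalk–Hedlund). By minimality of the base flow `M` projects onto `Ω`, and `M` meets each
fibre only once: otherwise `M` would be contained in a vertical translate of itself, which is
impossible at the lowest point of `M`. So `M` is the compact graph of a continuous primitive.

Hence, if `e` has no continuous primitive, `F ω` is unbounded below on both half-lines at every
`ω` where it is bounded above; this set is invariant and has full measure, and on it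
`h ω = -sup_t F ω t` satisfies `h(ω·t) - h ω = F ω t`.
-/

open MeasureTheory Set Function Bornology

theorem continuous_of_isCompact_range_graph {X Y : Type*} [TopologicalSpace X] [T2Space X]
    [TopologicalSpace Y] {f : X → Y} (hf : IsCompact (range fun x => (x, f x))) :
    Continuous f := by
  refine continuous_iff_isClosed.2 fun C hC => ?_
  have : f ⁻¹' C = Prod.fst '' (range (fun x => (x, f x)) ∩ univ ×ˢ C) := by
    ext x
    simp
  rw [this]
  exact ((hf.inter_right (isClosed_univ.prod hC)).image continuous_fst).isClosed

section MinimalSets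

variable {α : Type*} [TopologicalSpace α]

def compactForwardInvariantSets {τ : Type*} [Preorder τ] [Zero τ] (ψ : τ → α → α) :
    Set (Set α) :=
  {K | K.Nonempty ∧ IsCompact K ∧ IsForwardInvariant ψ K}

theorem exists_minimal_subset_of_mem_compactForwardInvariantSets [T2Space α] {τ : Type*}
    [Preorder τ] [Zero τ] {ψ : τ → α → α} {K : Set α}
    (hK : K ∈ compactForwardInvariantSets ψ) :
    ∃ M ⊆ K, Minimal (· ∈ compactForwardInvariantSets ψ) M := by
  refine zorn_superset_nonempty _ (fun c hcS hchain ⟨K, hK⟩ => ?_) K hK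
  have hcpt : ∀ U ∈ c, IsCompact U := fun U hU => (hcS hU).2.1
  refine ⟨⋂₀ c, ⟨?_, ?_, ?_⟩, fun U hU => sInter_subset_of_mem hU⟩
  · have : Nonempty c := ⟨⟨K, hK⟩⟩
    exact IsCompact.nonempty_sInter_of_directed_nonempty_isCompact_isClosed
      (show IsChain (· ⊇ ·) c from hchain.symm).directedOn (fun U hU => (hcS hU).1) hcpt
      fun U hU => (hcpt U hU).isClosed
  · exact (hcpt K hK).of_isClosed_subset (isClosed_sInter fun U hU => (hcpt U hU).isClosed)
      (sInter_subset_of_mem hK)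
  · exact fun t ht z hz U hU => (hcS hU).2.2 ht (hz U hU)

theorem IsForwardInvariant.closure {ψ : Flow ℝ α} {s : Set α} (hs : IsForwardInvariant ψ s) :
    IsForwardInvariant ψ (closure s) :=
  fun _ ht => (hs ht).closure (ψ.continuous continuous_const continuous_id)

theorem Minimal.isInvariant {ψ : Flow ℝ α} {M : Set α}
    (hM : Minimal (· ∈ compactForwardInvariantSets ψ) M) : IsInvariant ψ M := by
  obtain ⟨hne, hcpt, hfw⟩ := hM.prop
  have himage : ∀ t, 0 ≤ t → ψ t '' M = M := fun t ht =>
    hM.eq_of_le ⟨hne.image _, hcpt.image (ψ.continuous continuous_const continuous_id),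
      fun s hs => by
        rintro _ ⟨z, hz, rfl⟩
        exact ⟨ψ s z, hfw hs hz, by rw [← ψ.map_add, add_comm, ψ.map_add]⟩⟩
      (hfw ht).image_subset
  refine (ψ.isInvariant_iff_image_eq M).2 fun t => ?_
  rcases le_total 0 t with ht | ht
  · exact himage t ht
  · conv_lhs => rw [← himage (-t) (neg_nonneg.2 ht), image_image]
    simp_rw [← ψ.map_add, add_neg_cancel, ψ.map_zero_apply, image_id']

end MinimalSets

section Cocycles

variable {Ω : Type*} [TopologicalSpace Ω]

def Flow.IsAddCocycle (ϕ : Flow ℝ Ω) (F : Ω → ℝ → ℝ) : Prop :=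
  ∀ ω s t, F ω (s + t) = F ω s + F (ϕ s ω) t

namespace Flow.IsAddCocycle

variable {ϕ : Flow ℝ Ω} {F : Ω → ℝ → ℝ}

theorem apply_zero (hF : ϕ.IsAddCocycle F) (ω : Ω) : F ω 0 = 0 := by
  simpa [ϕ.map_zero_apply] using hF ω 0 0

theorem apply_flow (hF : ϕ.IsAddCocycle F) (ω : Ω) (s t : ℝ) :
    F (ϕ s ω) t = F ω (s + t) - F ω s := by
  rw [hF]; ring

theorem reverse (hF : ϕ.IsAddCocycle F) : ϕ.reverse.IsAddCocycle fun ω t => F ω (-t) := by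
  intro ω s t
  simp only [Flow.reverse_apply, neg_add]
  exact hF ω (-s) (-t)

theorem bddAbove_range_apply_flow_iff (hF : ϕ.IsAddCocycle F) (ω : Ω) (s : ℝ) :
    BddAbove (range (F (ϕ s ω))) ↔ BddAbove (range (F ω)) := by
  simp only [bddAbove_def, forall_mem_range, hF.apply_flow]
  constructor
  · rintro ⟨M, hM⟩
    refine ⟨M + F ω s, fun t => ?_⟩
    have := hM (t - s)
    rw [add_sub_cancel] at this
    linarith
  · rintro ⟨M, hM⟩
    exact ⟨M - F ω s, fun t => by linarith [hM (s + t)]⟩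

theorem ciSup_apply_flow (hF : ϕ.IsAddCocycle F) {ω : Ω} (hω : BddAbove (range (F ω)))
    (s : ℝ) : ⨆ t, F (ϕ s ω) t = (⨆ t, F ω t) - F ω s := by
  rw [ciSup_sub hω]
  simp_rw [hF.apply_flow]
  exact (Equiv.addLeft s).surjective.iSup_comp fun t => F ω t - F ω s

theorem neg_iSup_nonpos (hF : ϕ.IsAddCocycle F) (ω : Ω) : -⨆ t, F ω t ≤ 0 :=
  neg_nonpos.2 (Real.iSup_nonneg' ⟨0, (hF.apply_zero ω).ge⟩)

theorem exists_mem_neg_iSup_apply_flow_lt (hF : ϕ.IsAddCocycle F) {ω : Ω}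
    (hω : BddAbove (range (F ω))) {s : Set ℝ} (hs : ¬ BddBelow (F ω '' s)) (N : ℝ) :
    ∃ t ∈ s, -⨆ u, F (ϕ t ω) u < N := by
  obtain ⟨_, ⟨t, ht, rfl⟩, hlt⟩ := not_bddBelow_iff.1 hs (N + ⨆ u, F ω u)
  refine ⟨t, ht, ?_⟩
  rw [hF.ciSup_apply_flow hω]
  linarith

end Flow.IsAddCocycle

end Cocycles

section GottschalkHedlund

variable {Ω : Type*} [TopologicalSpace Ω] {F : Ω → ℝ → ℝ}

def Flow.skewProduct (ϕ : Flow ℝ Ω) (hFc : Continuous (uncurry F)) (hF : ϕ.IsAddCocycle F) :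
    Flow ℝ (Ω × ℝ) where
  toFun t p := (ϕ t p.1, p.2 + F p.1 t)
  cont' := (ϕ.continuous continuous_fst (continuous_fst.comp continuous_snd)).prodMk
    ((continuous_snd.comp continuous_snd).add
      (hFc.comp ((continuous_fst.comp continuous_snd).prodMk continuous_fst)))
  map_add' s t p := by
    ext
    · exact ϕ.map_add s t p.1
    · simp only [add_comm s t, hF p.1 t s, add_assoc]
  map_zero' p := by simp [ϕ.map_zero_apply, hF.apply_zero]

variable {ϕ : Flow ℝ Ω} (hFc : Continuous (uncurry F)) (hF : ϕ.IsAddCocycle F)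

@[simp]
theorem Flow.skewProduct_apply (t : ℝ) (p : Ω × ℝ) :
    ϕ.skewProduct hFc hF t p = (ϕ t p.1, p.2 + F p.1 t) :=
  rfl

variable {hFc hF} [T2Space Ω] {M : Set (Ω × ℝ)}

theorem Minimal.exists_mk_mem (hmin : ∀ ω, Dense (range fun t => ϕ t ω))
    (hM : Minimal (· ∈ compactForwardInvariantSets (ϕ.skewProduct hFc hF)) M) (x : Ω) :
    ∃ r, (x, r) ∈ M := by
  obtain ⟨⟨x₀, r₀⟩, h₀⟩ := hM.prop.1
  have hdense : Dense (Prod.fst '' M) := (hmin x₀).mono <| by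
    rintro _ ⟨t, rfl⟩
    exact ⟨_, hM.isInvariant t h₀, rfl⟩
  have hx : x ∈ Prod.fst '' M := by
    rw [((hM.prop.2.1.image continuous_fst).isClosed.closure_eq).symm.trans hdense.closure_eq]
    trivial
  obtain ⟨⟨_, r⟩, hr, rfl⟩ := hx
  exact ⟨r, hr⟩

theorem Minimal.not_mk_add_mem
    (hM : Minimal (· ∈ compactForwardInvariantSets (ϕ.skewProduct hFc hF)) M)
    {x : Ω} {r c : ℝ} (hc : 0 < c) (hr : (x, r) ∈ M) (hrc : (x, r + c) ∈ M) : False := by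
  obtain ⟨-, hcpt, hfw⟩ := hM.prop
  let T : Ω × ℝ → Ω × ℝ := fun p => (p.1, p.2 + c)
  have hT : Continuous T := continuous_fst.prodMk (continuous_snd.add continuous_const)
  have hTM : IsForwardInvariant (ϕ.skewProduct hFc hF) (T '' M) := by
    rintro t ht _ ⟨p, hp, rfl⟩
    exact ⟨_, hfw ht hp, by simp only [T, Flow.skewProduct_apply]; ring_nf⟩
  have hsub : M ⊆ T '' M := by
    have hN : M ∩ T '' M ∈ compactForwardInvariantSets (ϕ.skewProduct hFc hF) :=
      ⟨⟨_, hrc, _, hr, rfl⟩, hcpt.inter_right (hcpt.image hT).isClosed,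
        fun t ht => (hfw ht).inter_inter (hTM ht)⟩
    exact (hM.eq_of_le hN inter_subset_left).symm.subset.trans inter_subset_right
  obtain ⟨z, hz, hzmin⟩ := hcpt.exists_isMinOn ⟨_, hr⟩ continuous_snd.continuousOn
  obtain ⟨w, hw, rfl⟩ := hsub hz
  have : (T w).2 ≤ w.2 := hzmin hw
  simp only [T] at this
  linarith

theorem Minimal.eq_of_mk_mem
    (hM : Minimal (· ∈ compactForwardInvariantSets (ϕ.skewProduct hFc hF)) M)
    {x : Ω} {r r' : ℝ} (hr : (x, r) ∈ M) (hr' : (x, r') ∈ M) : r = r' := by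
  by_contra hne
  rcases lt_or_gt_of_ne hne with h | h
  · exact hM.not_mk_add_mem (sub_pos.2 h) hr (by rwa [add_sub_cancel])
  · exact hM.not_mk_add_mem (sub_pos.2 h) hr' (by rwa [add_sub_cancel])

variable (hFc hF) [CompactSpace Ω] (hmin : ∀ ω, Dense (range fun t => ϕ t ω))
include hmin hFc hF

theorem Flow.IsAddCocycle.exists_continuous_coboundary_of_isBounded_Ici {ω₀ : Ω}
    (hb : IsBounded (F ω₀ '' Ici 0)) :
    ∃ h : Ω → ℝ, Continuous h ∧ ∀ ω t, h (ϕ t ω) - h ω = F ω t := by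
  set ψ := ϕ.skewProduct hFc hF
  have hK : closure (ψ.forwardOrbit (ω₀, 0)) ∈ compactForwardInvariantSets ψ := by
    refine ⟨⟨(ω₀, 0), subset_closure (ψ.restrictNonneg.mem_orbit_self _)⟩, ?_,
      (ψ.isForwardInvariant_forwardOrbit _).closure⟩
    refine (isCompact_univ.prod hb.isCompact_closure).of_isClosed_subset isClosed_closure
      (closure_minimal ?_ (isClosed_univ.prod isClosed_closure))
    rintro _ ⟨⟨t, ht⟩, rfl⟩
    exact ⟨trivial, subset_closure ⟨t, ht, (zero_add _).symm⟩⟩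
  obtain ⟨M, -, hM⟩ := exists_minimal_subset_of_mem_compactForwardInvariantSets hK
  choose h hh using hM.exists_mk_mem hmin
  have hgraph : range (fun x => (x, h x)) = M := by
    refine (range_subset_iff.2 hh).antisymm fun ⟨x, r⟩ hr => ⟨x, ?_⟩
    rw [hM.eq_of_mk_mem hr (hh x)]
  refine ⟨h, continuous_of_isCompact_range_graph (hgraph ▸ hM.prop.2.1), fun ω t => ?_⟩
  have := hM.eq_of_mk_mem (hh (ϕ t ω)) (hM.isInvariant t (hh ω))
  linarith

theorem Flow.IsAddCocycle.exists_continuous_coboundary_of_isBounded_Iic {ω₀ : Ω}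
    (hb : IsBounded (F ω₀ '' Iic 0)) :
    ∃ h : Ω → ℝ, Continuous h ∧ ∀ ω t, h (ϕ t ω) - h ω = F ω t := by
  have hmin' : ∀ ω, Dense (range fun t => ϕ.reverse t ω) := fun ω => by
    simpa only [Flow.reverse_apply] using
      (neg_surjective.range_comp fun t => ϕ t ω).symm ▸ hmin ω
  have hb' : IsBounded ((fun t => F ω₀ (-t)) '' Ici 0) :=
    hb.subset <| by
      rintro _ ⟨t, ht, rfl⟩
      exact ⟨-t, mem_Iic.2 (neg_nonpos.2 ht), rfl⟩
  obtain ⟨h, hc, hh⟩ := hF.reverse.exists_continuous_coboundary_of_isBounded_Ici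
    (F := fun ω t => F ω (-t)) (hFc.comp (continuous_fst.prodMk continuous_snd.neg)) hmin' hb'
  exact ⟨h, hc, fun ω t => by simpa using hh ω (-t)⟩

theorem Flow.IsAddCocycle.not_bddBelow_image_of_bddAbove_range
    (hno : ¬ ∃ h : Ω → ℝ, Continuous h ∧ ∀ ω t, h (ϕ t ω) - h ω = F ω t) {ω : Ω}
    (hω : BddAbove (range (F ω))) : ¬ BddBelow (F ω '' Ici 0) ∧ ¬ BddBelow (F ω '' Iic 0) :=
  ⟨fun hb => hno <| hF.exists_continuous_coboundary_of_isBounded_Ici hFc hmin <|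
      isBounded_iff_bddBelow_bddAbove.2 ⟨hb, hω.mono (image_subset_range _ _)⟩,
    fun hb => hno <| hF.exists_continuous_coboundary_of_isBounded_Iic hFc hmin <|
      isBounded_iff_bddBelow_bddAbove.2 ⟨hb, hω.mono (image_subset_range _ _)⟩⟩

end GottschalkHedlund

section IntegralCocycle

variable {Ω : Type*} [TopologicalSpace Ω] (ϕ : Flow ℝ Ω) (e : Ω → ℝ)

noncomputable def Flow.integralCocycle (ω : Ω) (t : ℝ) : ℝ :=
  ∫ s in (0 : ℝ)..t, e (ϕ s ω)

variable {e}

theorem Flow.continuous_integralCocycle (he : Continuous e) :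
    Continuous (uncurry (ϕ.integralCocycle e)) :=
  intervalIntegral.continuous_parametric_primitive_of_continuous (f := fun ω s => e (ϕ s ω))
    (he.comp (ϕ.continuous continuous_snd continuous_fst))

theorem Flow.isAddCocycle_integralCocycle (he : Continuous e) :
    ϕ.IsAddCocycle (ϕ.integralCocycle e) := by
  intro ω s t
  have hc : Continuous fun u => e (ϕ u ω) :=
    he.comp (ϕ.continuous continuous_id continuous_const)
  simp only [Flow.integralCocycle]
  rw [← intervalIntegral.integral_add_adjacent_intervals (hc.intervalIntegrable 0 s)
    (hc.intervalIntegrable s (s + t))]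
  simp_rw [← ϕ.map_add]
  rw [intervalIntegral.integral_comp_add_right (fun u => e (ϕ u ω)), zero_add, add_comm t s]

end IntegralCocycle

section Measurability

variable {γ δ : Type*} [TopologicalSpace γ] [TopologicalSpace.SeparableSpace γ]
  [MeasurableSpace δ] {F : δ → γ → ℝ}
  (hFc : ∀ ω, Continuous (F ω)) (hFm : ∀ t, Measurable fun ω => F ω t)
include hFc hFm

theorem measurable_iSup_of_continuous : Measurable fun ω => ⨆ t, F ω t := by
  obtain ⟨S, hSc, hSd⟩ := TopologicalSpace.exists_countable_dense γ
  have := hSc.to_subtype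
  simp_rw [← hSd.ciSup' (hFc _)]
  exact Measurable.iSup fun s => hFm s

theorem measurableSet_bddAbove_range_of_continuous :
    MeasurableSet {ω | BddAbove (range (F ω))} := by
  obtain ⟨S, hSc, hSd⟩ := TopologicalSpace.exists_countable_dense γ
  have := hSc.to_subtype
  have hS : ∀ ω, BddAbove (range (F ω)) ↔ BddAbove (range fun s : S => F ω s) := fun ω => by
    rw [BddAbove, BddAbove, ← hSd.upperBounds_image (hFc ω), image_eq_range]
  simp_rw [hS]
  exact measurableSet_bddAbove_range fun s => hFm s

end Measurability

theorem stmt11_general {Ω : Type*} [MetricSpace Ω] [CompactSpace Ω]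
    [MeasurableSpace Ω] [BorelSpace Ω]
    (φ : ℝ → Ω → Ω) (hφc : Continuous fun p : ℝ × Ω => φ p.1 p.2)
    (hφ0 : ∀ ω, φ 0 ω = ω) (hφadd : ∀ s t ω, φ (s + t) ω = φ s (φ t ω))
    (hmin : ∀ ω, Dense (Set.range fun t => φ t ω))
    (m : Measure Ω) [IsProbabilityMeasure m]
    (e : Ω → ℝ) (he : Continuous e)
    (hbdd : ∀ᵐ ω ∂m, ∃ M : ℝ, ∀ t : ℝ, ∫ s in (0:ℝ)..t, e (φ s ω) ≤ M)
    (hnoprim : ¬ ∃ h : Ω → ℝ, Continuous h ∧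
      ∀ (ω : Ω) (t : ℝ), h (φ t ω) - h ω = ∫ s in (0:ℝ)..t, e (φ s ω)) :
    ∃ (hₑ : Ω → ℝ) (Ωe : Set Ω), Measurable hₑ ∧ (∀ ω, hₑ ω ≤ 0) ∧
      MeasurableSet Ωe ∧ (∀ t, φ t ⁻¹' Ωe = Ωe) ∧ m Ωe = 1 ∧
      ∀ ω ∈ Ωe,
        (∀ t : ℝ, hₑ (φ t ω) - hₑ ω = ∫ s in (0:ℝ)..t, e (φ s ω)) ∧
        (∃ M : ℝ, ∀ t : ℝ, hₑ (φ t ω) ≤ M) ∧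
        (∀ N : ℝ, ∃ t : ℝ, t ≤ 0 ∧ hₑ (φ t ω) < N) ∧
        (∀ N : ℝ, ∃ t : ℝ, 0 ≤ t ∧ hₑ (φ t ω) < N) := by
  let ϕ : Flow ℝ Ω := ⟨φ, hφc, hφadd, hφ0⟩
  set F := ϕ.integralCocycle e
  have hFc : Continuous (uncurry F) := ϕ.continuous_integralCocycle he
  have hF : ϕ.IsAddCocycle F := ϕ.isAddCocycle_integralCocycle he
  have hFc₁ : ∀ ω, Continuous (F ω) := fun ω => hFc.comp (Continuous.prodMk_right ω)
  have hFm : ∀ t, Measurable fun ω => F ω t :=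
    fun t => (hFc.comp (Continuous.prodMk_left t)).measurable
  set Ωe := {ω | BddAbove (range (F ω))}
  have hΩe : MeasurableSet Ωe := measurableSet_bddAbove_range_of_continuous hFc₁ hFm
  have hunbdd : ∀ ω ∈ Ωe, ¬ BddBelow (F ω '' Ici 0) ∧ ¬ BddBelow (F ω '' Iic 0) :=
    fun ω hω => hF.not_bddBelow_image_of_bddAbove_range hFc hmin hnoprim hω
  refine ⟨fun ω => -⨆ t, F ω t, Ωe, (measurable_iSup_of_continuous hFc₁ hFm).neg,
    hF.neg_iSup_nonpos, hΩe, fun t => ext fun ω => hF.bddAbove_range_apply_flow_iff ω t, ?_,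
    fun ω hω => ⟨fun t => ?_, ⟨0, fun t => hF.neg_iSup_nonpos _⟩,
      hF.exists_mem_neg_iSup_apply_flow_lt hω (hunbdd ω hω).2,
      hF.exists_mem_neg_iSup_apply_flow_lt hω (hunbdd ω hω).1⟩⟩
  · exact (prob_compl_eq_zero_iff hΩe).1 <|
      ae_iff.1 <| hbdd.mono fun ω ⟨M, hM⟩ => ⟨M, forall_mem_range.2 hM⟩
  · show -(⨆ u, F (ϕ t ω) u) - -(⨆ u, F ω u) = F ω t
    rw [hF.ciSup_apply_flow hω]
    ring

/-- Over a minimal uniquely ergodic flow, if `e` is continuous with zero mean,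
`sup_{t∈ℝ} ∫₀ᵗ e(ω·s) ds < ∞` for a.e. `ω`, and `e` has no continuous primitive,
then there are a measurable `h_e : Ω → (-∞,0]` and an invariant full-measure set
`Ω^e` such that for `ω ∈ Ω^e`: `h_e(ω·t) - h_e(ω) = ∫₀ᵗ e(ω·s) ds` for all `t`,
`sup_{t∈ℝ} h_e(ω·t) < ∞`, and `inf_{t≤0} h_e(ω·t) = inf_{t≥0} h_e(ω·t) = -∞`. -/
theorem stmt11 {Ω : Type*} [MetricSpace Ω] [CompactSpace Ω]
    [MeasurableSpace Ω] [BorelSpace Ω]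
    (φ : ℝ → Ω → Ω) (hφc : Continuous fun p : ℝ × Ω => φ p.1 p.2)
    (hφ0 : ∀ ω, φ 0 ω = ω) (hφadd : ∀ s t ω, φ (s + t) ω = φ s (φ t ω))
    (hmin : ∀ ω, Dense (Set.range fun t => φ t ω))
    (m : Measure Ω) [IsProbabilityMeasure m]
    (hinv : ∀ t, MeasurePreserving (φ t) m m)
    (huniq : ∀ m' : Measure Ω, IsProbabilityMeasure m' →
      (∀ t, MeasurePreserving (φ t) m' m') → m' = m)
    (e : Ω → ℝ) (he : Continuous e) (hmean : ∫ ω, e ω ∂m = 0)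
    (hbdd : ∀ᵐ ω ∂m, ∃ M : ℝ, ∀ t : ℝ, ∫ s in (0:ℝ)..t, e (φ s ω) ≤ M)
    (hnoprim : ¬ ∃ h : Ω → ℝ, Continuous h ∧
      ∀ (ω : Ω) (t : ℝ), h (φ t ω) - h ω = ∫ s in (0:ℝ)..t, e (φ s ω)) :
    ∃ (hₑ : Ω → ℝ) (Ωe : Set Ω), Measurable hₑ ∧ (∀ ω, hₑ ω ≤ 0) ∧
      MeasurableSet Ωe ∧ (∀ t, φ t ⁻¹' Ωe = Ωe) ∧ m Ωe = 1 ∧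
      ∀ ω ∈ Ωe,
        (∀ t : ℝ, hₑ (φ t ω) - hₑ ω = ∫ s in (0:ℝ)..t, e (φ s ω)) ∧
        (∃ M : ℝ, ∀ t : ℝ, hₑ (φ t ω) ≤ M) ∧
        (∀ N : ℝ, ∃ t : ℝ, t ≤ 0 ∧ hₑ (φ t ω) < N) ∧
        (∀ N : ℝ, ∃ t : ℝ, 0 ≤ t ∧ hₑ (φ t ω) < N) :=
  stmt11_general φ hφc hφ0 hφadd hmin m e he hbdd hnoprim
end

section
/- If e : Ω → ℝ is continuous on a compact space carrying a minimal flow and sup_{t ≥ 0} |∫₀ᵗ e(ω₀·s) ds| < ∞ for some ω₀ ∈ Ω, then e admits a continuous primitive, i.e. there exists continuous h : Ω → ℝ with h(ω·t) − h(ω) = ∫₀ᵗ e(ω·s) ds for all ω ∈ Ω and t ∈ ℝ; in particular ∫ e dm = 0 for every invariant measure m. -/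
/-!
The skew-product flow `(ω, x) ↦ (ϕ t ω, x + ∫₀ᵗ e (ϕ s ω) ds)` on `Ω × ℝ` has a bounded forward
orbit through `(ω₀, 0)`, so its ω-limit set `K` is nonempty, compact and invariant. By minimality
`K` projects onto `Ω`, and the flow translates the fibres of `K` by the cocycle, so both the top
`fiberSup K` and the bottom `fiberInf K` of the fibres solve the cohomological equation. Their
difference is an invariant upper semicontinuous function, hence constant on a minimal flow (its
superlevel set at its maximum is closed and invariant). So `fiberSup K` is also lower
semicontinuous, i.e. a continuous primitive. Integrating `h (ϕ 1 ω) - h ω = ∫₀¹ e (ϕ s ω) ds`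
against an invariant measure and applying Fubini gives `∫ e dm = 0`.
-/

open MeasureTheory Set Filter Topology

namespace Flow

variable {Ω : Type*} [TopologicalSpace Ω]

noncomputable def integralCocycle_s12 (ϕ : Flow ℝ Ω) (e : Ω → ℝ) (t : ℝ) (ω : Ω) : ℝ :=
  ∫ s in (0 : ℝ)..t, e (ϕ s ω)

variable {ϕ : Flow ℝ Ω} {e : Ω → ℝ}

theorem continuous_integralCocycle_s12 (he : Continuous e) :
    Continuous fun p : ℝ × Ω => ϕ.integralCocycle_s12 e p.1 p.2 :=
  (intervalIntegral.continuous_parametric_primitive_of_continuous (a₀ := 0)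
    (f := fun ω s => e (ϕ s ω)) (he.comp (ϕ.continuous continuous_snd continuous_fst))).comp
    continuous_swap

theorem integralCocycle_add (he : Continuous e) (s t : ℝ) (ω : Ω) :
    ϕ.integralCocycle_s12 e (s + t) ω = ϕ.integralCocycle_s12 e t ω + ϕ.integralCocycle_s12 e s (ϕ t ω) := by
  have hint (a b : ℝ) : IntervalIntegrable (fun u => e (ϕ u ω)) volume a b :=
    (he.comp (ϕ.continuous continuous_id continuous_const)).intervalIntegrable a b
  simp only [integralCocycle_s12, ← ϕ.map_add]
  rw [← intervalIntegral.integral_add_adjacent_intervals (hint 0 t) (hint t (s + t)),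
    intervalIntegral.integral_comp_add_right (fun u => e (ϕ u ω)), zero_add]

theorem integralCocycle_neg_apply (he : Continuous e) (t : ℝ) (ω : Ω) :
    ϕ.integralCocycle_s12 e (-t) (ϕ t ω) = -ϕ.integralCocycle_s12 e t ω := by
  have h := integralCocycle_add (ϕ := ϕ) he (-t) t ω
  rw [neg_add_cancel, integralCocycle_s12, intervalIntegral.integral_same] at h
  linarith

variable (ϕ) in
noncomputable def skewProduct_s12 (he : Continuous e) : Flow ℝ (Ω × ℝ) where
  toFun t p := (ϕ t p.1, p.2 + ϕ.integralCocycle_s12 e t p.1)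
  cont' := (ϕ.continuous continuous_fst (continuous_fst.comp continuous_snd)).prodMk
    ((continuous_snd.comp continuous_snd).add ((continuous_integralCocycle_s12 he).comp
      (continuous_fst.prodMk (continuous_fst.comp continuous_snd))))
  map_add' s t p := by
    simp only [ϕ.map_add, integralCocycle_add he, add_assoc]
  map_zero' p := by
    simp [integralCocycle_s12]

theorem exists_nonempty_isCompact_isInvariant {X : Type*} [TopologicalSpace X] [T2Space X]
    (Ψ : Flow ℝ X) {x : X} {C : Set X} (hC : IsCompact C) (hx : ∀ t, 0 ≤ t → Ψ t x ∈ C) :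
    ∃ K : Set X, K.Nonempty ∧ IsCompact K ∧ IsInvariant Ψ K := by
  have habs : closure (image2 Ψ (Ici 0) {x}) ⊆ C :=
    closure_minimal (by rintro _ ⟨t, ht, _, rfl, rfl⟩; exact hx t ht) hC.isClosed
  refine ⟨omegaLimit atTop Ψ {x}, ?_, ?_, ?_⟩
  · exact nonempty_omegaLimit_of_isCompact_absorbing _ _ _ hC ⟨Ici 0, Ici_mem_atTop 0, habs⟩
      (singleton_nonempty x)
  · exact hC.of_isClosed_subset (isClosed_omegaLimit _ _ _)
      ((omegaLimit_subset_closure_image2 _ _ _ (Ici_mem_atTop 0)).trans habs)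
  · exact Ψ.isInvariant_omegaLimit _ _ fun t => tendsto_atTop_add_const_left _ t tendsto_id

theorem eq_univ_of_isClosed_of_isInvariant (hmin : ∀ ω, Dense (range fun t => ϕ t ω))
    {S : Set Ω} (hS : IsClosed S) (hne : S.Nonempty) (hinv : IsInvariant ϕ S) : S = univ := by
  obtain ⟨ω, hω⟩ := hne
  refine eq_univ_of_univ_subset ?_
  rw [← (hmin ω).closure_eq]
  exact closure_minimal (by rintro _ ⟨t, rfl⟩; exact hinv t hω) hS

theorem _root_.UpperSemicontinuous.eq_of_flow_invariant [CompactSpace Ω]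
    (hmin : ∀ ω, Dense (range fun t => ϕ t ω)) {g : Ω → ℝ} (hg : UpperSemicontinuous g)
    (hinv : ∀ t ω, g (ϕ t ω) = g ω) (ω ω' : Ω) : g ω = g ω' := by
  obtain ⟨ω₁, -, hmax⟩ := (hg.upperSemicontinuousOn univ).exists_isMaxOn
    ⟨ω, mem_univ ω⟩ isCompact_univ
  have hsub : g ⁻¹' Ici (g ω₁) = univ := ϕ.eq_univ_of_isClosed_of_isInvariant hmin
    (hg.isClosed_preimage _) ⟨ω₁, le_refl (g ω₁)⟩ fun t ω hω => by
      simpa [mem_preimage, hinv] using hω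
  have hconst (ω : Ω) : g ω = g ω₁ :=
    le_antisymm (hmax (mem_univ ω)) (eq_univ_iff_forall.1 hsub ω)
  rw [hconst ω, hconst ω']

theorem apply_eq_add_of_add_le {c : ℝ → Ω → ℝ} (hc : ∀ t ω, c (-t) (ϕ t ω) = -c t ω)
    {g : Ω → ℝ} (hg : ∀ t ω, g ω + c t ω ≤ g (ϕ t ω)) (t : ℝ) (ω : Ω) :
    g (ϕ t ω) = g ω + c t ω := by
  have h := hg (-t) (ϕ t ω)
  rw [← ϕ.map_add, neg_add_cancel, ϕ.map_zero_apply, hc] at h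
  exact le_antisymm (by linarith) (hg t ω)

theorem apply_eq_add_of_le_add {c : ℝ → Ω → ℝ} (hc : ∀ t ω, c (-t) (ϕ t ω) = -c t ω)
    {g : Ω → ℝ} (hg : ∀ t ω, g (ϕ t ω) ≤ g ω + c t ω) (t : ℝ) (ω : Ω) :
    g (ϕ t ω) = g ω + c t ω := by
  have h := hg (-t) (ϕ t ω)
  rw [← ϕ.map_add, neg_add_cancel, ϕ.map_zero_apply, hc] at h
  exact le_antisymm (hg t ω) (by linarith)

end Flow

section Fiber

variable {X : Type*} [TopologicalSpace X] [T2Space X] {K : Set (X × ℝ)}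

noncomputable def fiberSup (K : Set (X × ℝ)) (x : X) : ℝ := sSup (Prod.mk x ⁻¹' K)

noncomputable def fiberInf (K : Set (X × ℝ)) (x : X) : ℝ := sInf (Prod.mk x ⁻¹' K)

theorem IsCompact.preimage_prodMk (hK : IsCompact K) (x : X) : IsCompact (Prod.mk x ⁻¹' K) :=
  (hK.image continuous_snd).of_isClosed_subset (hK.isClosed.preimage (Continuous.prodMk_right x))
    fun y hy => ⟨(x, y), hy, rfl⟩

theorem fiberSup_mem (hK : IsCompact K) {x : X} (hx : (Prod.mk x ⁻¹' K).Nonempty) :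
    (x, fiberSup K x) ∈ K :=
  (hK.preimage_prodMk x).sSup_mem hx

theorem fiberInf_mem (hK : IsCompact K) {x : X} (hx : (Prod.mk x ⁻¹' K).Nonempty) :
    (x, fiberInf K x) ∈ K :=
  (hK.preimage_prodMk x).sInf_mem hx

theorem le_fiberSup (hK : IsCompact K) {x : X} {y : ℝ} (h : (x, y) ∈ K) : y ≤ fiberSup K x :=
  le_csSup (hK.preimage_prodMk x).bddAbove h

theorem fiberInf_le (hK : IsCompact K) {x : X} {y : ℝ} (h : (x, y) ∈ K) : fiberInf K x ≤ y :=
  csInf_le (hK.preimage_prodMk x).bddBelow h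

theorem upperSemicontinuous_fiberSup (hK : IsCompact K)
    (hfib : ∀ x, (Prod.mk x ⁻¹' K).Nonempty) : UpperSemicontinuous (fiberSup K) := by
  refine upperSemicontinuous_iff_isClosed_preimage.2 fun a => ?_
  have h : fiberSup K ⁻¹' Ici a = Prod.fst '' (K ∩ Prod.snd ⁻¹' Ici a) := by
    ext x
    refine ⟨fun hx => ⟨_, ⟨fiberSup_mem hK (hfib x), hx⟩, rfl⟩, ?_⟩
    rintro ⟨⟨x, y⟩, ⟨hy, hay⟩, rfl⟩
    exact le_trans hay (le_fiberSup hK hy)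
  rw [h]
  exact ((hK.inter_right (isClosed_Ici.preimage continuous_snd)).image continuous_fst).isClosed

theorem lowerSemicontinuous_fiberInf (hK : IsCompact K)
    (hfib : ∀ x, (Prod.mk x ⁻¹' K).Nonempty) : LowerSemicontinuous (fiberInf K) := by
  refine lowerSemicontinuous_iff_isClosed_preimage.2 fun a => ?_
  have h : fiberInf K ⁻¹' Iic a = Prod.fst '' (K ∩ Prod.snd ⁻¹' Iic a) := by
    ext x
    refine ⟨fun hx => ⟨_, ⟨fiberInf_mem hK (hfib x), hx⟩, rfl⟩, ?_⟩
    rintro ⟨⟨x, y⟩, ⟨hy, hya⟩, rfl⟩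
    exact le_trans (fiberInf_le hK hy) hya
  rw [h]
  exact ((hK.inter_right (isClosed_Iic.preimage continuous_snd)).image continuous_fst).isClosed

end Fiber

namespace Flow

variable {Ω : Type*} [TopologicalSpace Ω] [CompactSpace Ω] {ϕ : Flow ℝ Ω} {e : Ω → ℝ}

theorem exists_continuous_primitive_of_isInvariant [T2Space Ω]
    (hmin : ∀ ω, Dense (range fun t => ϕ t ω)) (he : Continuous e) {K : Set (Ω × ℝ)}
    (hK : IsCompact K) (hne : K.Nonempty) (hinv : IsInvariant (ϕ.skewProduct_s12 he) K) :
    ∃ h : Ω → ℝ, Continuous h ∧ ∀ t ω, h (ϕ t ω) = h ω + ϕ.integralCocycle_s12 e t ω := by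
  have hproj : Prod.fst '' K = univ :=
    ϕ.eq_univ_of_isClosed_of_isInvariant hmin (hK.image continuous_fst).isClosed (hne.image _)
      (by rintro t _ ⟨p, hp, rfl⟩; exact ⟨_, hinv t hp, rfl⟩)
  have hfib (ω : Ω) : (Prod.mk ω ⁻¹' K).Nonempty := by
    obtain ⟨p, hp, rfl⟩ := eq_univ_iff_forall.1 hproj ω
    exact ⟨p.2, hp⟩
  have hsup := ϕ.apply_eq_add_of_add_le (integralCocycle_neg_apply he) (g := fiberSup K)
    fun t ω => le_fiberSup hK (hinv t (fiberSup_mem hK (hfib ω)))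
  have hinf := ϕ.apply_eq_add_of_le_add (integralCocycle_neg_apply he) (g := fiberInf K)
    fun t ω => fiberInf_le hK (hinv t (fiberInf_mem hK (hfib ω)))
  have husc := upperSemicontinuous_fiberSup hK hfib
  have hlsc := lowerSemicontinuous_fiberInf hK hfib
  obtain ⟨⟨ω₁, -⟩, -⟩ := hne
  have hwidth (ω : Ω) : fiberSup K ω = fiberInf K ω + (fiberSup K ω₁ - fiberInf K ω₁) := by
    have := (husc.add hlsc.neg).eq_of_flow_invariant hmin
      (fun t ω => by simp only [Pi.neg_apply, hsup, hinf]; ring) ω ω₁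
    simp only [Pi.neg_apply] at this
    linarith
  refine ⟨fiberSup K, continuous_iff_lower_upperSemicontinuous.2 ⟨?_, husc⟩, hsup⟩
  rw [funext hwidth]
  exact hlsc.add lowerSemicontinuous_const

theorem integral_eq_zero_of_primitive [MeasurableSpace Ω] [BorelSpace Ω] {m : Measure Ω}
    [IsFiniteMeasure m] (hm : ∀ t, MeasurePreserving (ϕ t) m m) (he : Continuous e)
    {h : Ω → ℝ} (hh : Continuous h) (hprim : ∀ t ω, h (ϕ t ω) = h ω + ϕ.integralCocycle_s12 e t ω) :
    ∫ ω, e ω ∂m = 0 := by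
  have : IsFiniteMeasure (volume.restrict (uIoc (0 : ℝ) 1)) :=
    isFiniteMeasure_restrict.2 (by simp)
  have hcomp (t : ℝ) (f : Ω → ℝ) : ∫ ω, f (ϕ t ω) ∂m = ∫ ω, f ω ∂m :=
    (hm t).integral_comp (ϕ.toHomeomorph t).measurableEmbedding f
  have hint {f : Ω → ℝ} (hf : Continuous f) : Integrable f m :=
    hf.integrable_of_hasCompactSupport (HasCompactSupport.of_compactSpace f)
  obtain ⟨C, hC⟩ := isCompact_univ.exists_bound_of_continuousOn he.continuousOn
  have hprod : Integrable (Function.uncurry fun s ω => e (ϕ s ω))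
      ((volume.restrict (uIoc 0 1)).prod m) :=
    .of_bound (he.comp (ϕ.continuous continuous_fst continuous_snd)).aestronglyMeasurable
      C (ae_of_all _ fun p => hC _ (mem_univ _))
  calc ∫ ω, e ω ∂m = ∫ s in (0 : ℝ)..1, ∫ ω, e (ϕ s ω) ∂m := by simp [hcomp]
    _ = ∫ ω, ϕ.integralCocycle_s12 e 1 ω ∂m := intervalIntegral_integral_swap hprod
    _ = ∫ ω, (h (ϕ 1 ω) - h ω) ∂m := by simp [hprim]
    _ = 0 := by
      rw [integral_sub (hint (f := fun ω => h (ϕ 1 ω)) (hh.comp (ϕ.continuous_toFun 1)))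
        (hint hh), hcomp, sub_self]

end Flow

/-- If `e` is continuous on a compact space carrying a minimal continuous flow
and `∫₀ᵗ e(ω₀·s) ds` is bounded on `t ≥ 0` for some `ω₀`, then `e` admits a
continuous primitive; in particular `∫ e dm = 0` for every invariant probability
measure `m`. -/
theorem stmt12 {Ω : Type*} [MetricSpace Ω] [CompactSpace Ω]
    [MeasurableSpace Ω] [BorelSpace Ω]
    (φ : ℝ → Ω → Ω) (hφc : Continuous fun p : ℝ × Ω => φ p.1 p.2)
    (hφ0 : ∀ ω, φ 0 ω = ω) (hφadd : ∀ s t ω, φ (s + t) ω = φ s (φ t ω))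
    (hmin : ∀ ω, Dense (Set.range fun t => φ t ω))
    (e : Ω → ℝ) (he : Continuous e)
    (ω₀ : Ω) (M : ℝ) (hbd : ∀ t : ℝ, 0 ≤ t → |∫ s in (0:ℝ)..t, e (φ s ω₀)| ≤ M) :
    (∃ h : Ω → ℝ, Continuous h ∧
      ∀ (ω : Ω) (t : ℝ), h (φ t ω) - h ω = ∫ s in (0:ℝ)..t, e (φ s ω)) ∧
    (∀ m : Measure Ω, IsProbabilityMeasure m →
      (∀ t, MeasurePreserving (φ t) m m) → ∫ ω, e ω ∂m = 0) := by
  let ϕ : Flow ℝ Ω := ⟨φ, hφc, hφadd, hφ0⟩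
  obtain ⟨K, hne, hK, hinv⟩ :=
    (ϕ.skewProduct_s12 he).exists_nonempty_isCompact_isInvariant (x := (ω₀, 0))
      (isCompact_univ.prod isCompact_Icc) fun t ht => by
        simpa [abs_le, Flow.skewProduct_s12, Flow.integralCocycle_s12, ϕ] using hbd t ht
  obtain ⟨h, hh, hprim⟩ := Flow.exists_continuous_primitive_of_isInvariant hmin he hK hne hinv
  refine ⟨⟨h, hh, fun ω t => by rw [hprim]; simp [Flow.integralCocycle_s12, ϕ]⟩, fun m _ hm => ?_⟩
  exact Flow.integral_eq_zero_of_primitive (ϕ := ϕ) hm he hh hprim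
end

section
/- Let p_t(ω,θ) := (1/t) ∫_{−t}^0 exp(∫₀ˢ (∂f/∂θ)(σ̃(r,ω,θ)) dr) ds. Then for every measurable set C ⊆ Ω×ℙ and t > 0, ∫_C p_t d(m×l_ℙ) = (1/t) ∫_{−t}^0 (m×l_ℙ)(σ̃_s(C)) ds; in particular ∫_{Ω×ℙ} p_t d(m×l_ℙ) = 1, and p := liminf_{t→∞} p_t satisfies ∫ p d(m×l_ℙ) ≤ 1, so p ∈ L¹(Ω×ℙ, m×l_ℙ). -/
/-!
The density `q s ω` is the derivative of the fibre map `θ ↦ Θ s ω θ`, which lifts a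
diffeomorphism of the circle `ℝ/πℤ`. A fibrewise change of variables (periodicity moves the image
interval back to `[0, π)`), followed by invariance of `m` under the base flow, gives
`∫_C q s dν = ν (T₋ₛ⁻¹ C)` for the time-`(-s)` map `T₋ₛ` of the projective flow. Averaging over
`s ∈ (-t, 0]` and exchanging the integrals yields the formula for `∫_C p t dν`; for `C = univ` it
gives total mass one, and Fatou's lemma bounds the integral of the `liminf`.
-/

open MeasureTheory Set Filter Function
open scoped ENNReal

theorem measurable_toIcoMod {c : ℝ} (hc : 0 < c) (a : ℝ) : Measurable (toIcoMod hc a) := by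
  have h : toIcoMod hc a = fun b => toIcoMod hc 0 (b - a) + a := funext (toIcoMod_eq_sub hc a)
  simp only [h, toIcoMod_eq_fract_mul]
  fun_prop

theorem toIcoMod_zero_eq_sub_mul_floor {c : ℝ} (hc : 0 < c) (b : ℝ) :
    toIcoMod hc 0 b = b - c * ⌊b / c⌋ := by
  rw [toIcoMod_eq_fract_mul, Int.fract, sub_mul, div_mul_cancel₀ _ hc.ne', mul_comm]

theorem continuous_exp_intervalIntegral {X : Type*} [TopologicalSpace X] {F : ℝ → X → ℝ}
    (hF : Continuous (uncurry F)) :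
    Continuous fun z : ℝ × X => Real.exp (∫ r in (0 : ℝ)..z.1, F r z.2) :=
  Real.continuous_exp.comp <|
    intervalIntegral.continuous_parametric_intervalIntegral_of_continuous
      (f := fun z r => F r z.2)
      (by exact hF.comp (continuous_snd.prodMk (continuous_snd.comp continuous_fst)))
      continuous_fst

theorem Function.Periodic.setLIntegral_Ico_add_eq {F : ℝ → ℝ≥0∞} {c : ℝ} (hF : Periodic F c)
    (hc : 0 < c) (a b : ℝ) :
    ∫⁻ x in Ico a (a + c), F x = ∫⁻ x in Ico b (b + c), F x := by
  simp only [setLIntegral_congr Ico_ae_eq_Ioc]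
  refine (isAddFundamentalDomain_Ioc hc a).setLIntegral_eq (isAddFundamentalDomain_Ioc hc b) F ?_
  rintro ⟨_, n, rfl⟩ x
  simpa [add_comm] using hF.zsmul n x

theorem periodic_deriv_of_map_add_period {g g' : ℝ → ℝ} {c : ℝ}
    (hg : ∀ x, HasDerivAt g (g' x) x) (hper : ∀ x, g (x + c) = g x + c) : Periodic g' c := by
  intro x
  have h : HasDerivAt (fun y => g (y + c)) (g' (x + c)) x := (hg (x + c)).comp_add_const x c
  simp only [hper] at h
  exact h.unique ((hg x).add_const c)

theorem setLIntegral_Ico_eq_setLIntegral_deriv_mul_comp {g g' : ℝ → ℝ} {F : ℝ → ℝ≥0∞} {c : ℝ}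
    (hc : 0 < c) (hg : ∀ x, HasDerivAt g (g' x) x) (hmono : StrictMono g) (hsurj : Surjective g)
    (hper : ∀ x, g (x + c) = g x + c) (hF : Periodic F c) :
    ∫⁻ y in Ico 0 c, F y = ∫⁻ x in Ico 0 c, ENNReal.ofReal (g' x) * F (g x) := by
  obtain ⟨a, ha⟩ := hsurj 0
  have himage : g '' Ico a (a + c) = Ico 0 c := by
    simpa [ha, hper] using (hmono.orderIsoOfSurjective g hsurj).image_Ico a (a + c)
  have hperiodic : Periodic (fun x => ENNReal.ofReal (g' x) * F (g x)) c := by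
    intro x
    simp only [periodic_deriv_of_map_add_period hg hper x, hper, hF (g x)]
  calc ∫⁻ y in Ico 0 c, F y = ∫⁻ y in g '' Ico a (a + c), F y := by rw [himage]
    _ = ∫⁻ x in Ico a (a + c), ENNReal.ofReal (g' x) * F (g x) :=
      lintegral_image_eq_lintegral_deriv_mul_of_monotoneOn measurableSet_Ico
        (fun x _ => (hg x).hasDerivWithinAt) (hmono.monotone.monotoneOn _) F
    _ = ∫⁻ x in Ico 0 c, ENNReal.ofReal (g' x) * F (g x) := by
      rw [hperiodic.setLIntegral_Ico_add_eq hc a 0, zero_add]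

theorem setLIntegral_deriv_eq_measure_preimage {Ω : Type*} [MeasurableSpace Ω] {m : Measure Ω}
    [SFinite m] {ψ : Ω → Ω} (hψ : MeasurePreserving ψ m m) {c : ℝ} (hc : 0 < c)
    {g g' h : Ω → ℝ → ℝ} (hg : ∀ ω x, HasDerivAt (g ω) (g' ω x) x)
    (hmono : ∀ ω, StrictMono (g ω)) (hper : ∀ ω x, g ω (x + c) = g ω x + c)
    (hgh : ∀ ω y, g ω (h ω y) = y) (hg'm : Measurable (uncurry g'))
    (hhm : Measurable (uncurry h)) {C : Set (Ω × ℝ)} (hC : MeasurableSet C) :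
    ∫⁻ x in C, ENNReal.ofReal (g' x.1 x.2) ∂m.prod (volume.restrict (Ico 0 c)) =
      m.prod (volume.restrict (Ico 0 c))
        ((fun x => (ψ x.1, toIcoMod hc 0 (h (ψ x.1) x.2))) ⁻¹' C) := by
  have hhg : ∀ ω x, h ω (g ω x) = x := fun ω x => (hmono ω).injective (hgh ω _)
  have hhper : ∀ ω y, h ω (y + c) = h ω y + c := fun ω y =>
    (hmono ω).injective (by rw [hgh, hper, hgh])
  have hfiber : ∀ ω,
      ∫⁻ θ in Ico 0 c, C.indicator (fun x => ENNReal.ofReal (g' x.1 x.2)) (ω, θ) =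
        ∫⁻ θ in Ico 0 c, C.indicator 1 (ω, toIcoMod hc 0 (h ω θ)) := by
    intro ω
    rw [setLIntegral_Ico_eq_setLIntegral_deriv_mul_comp hc (hg ω) (hmono ω)
      (fun y => ⟨h ω y, hgh ω y⟩) (hper ω)
      (F := fun θ => C.indicator 1 (ω, toIcoMod hc 0 (h ω θ)))
      (fun θ => by simp only [hhper, toIcoMod_add_right])]
    refine setLIntegral_congr_fun measurableSet_Ico fun θ hθ => ?_
    rw [hhg, (toIcoMod_eq_self hc).2 (by rwa [zero_add])]
    by_cases hθC : (ω, θ) ∈ C <;> simp [hθC]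
  have hE : Measurable fun x : Ω × ℝ => (x.1, toIcoMod hc 0 (h x.1 x.2)) :=
    measurable_fst.prodMk ((measurable_toIcoMod hc 0).comp hhm)
  have hEC : Measurable fun x : Ω × ℝ => C.indicator (1 : Ω × ℝ → ℝ≥0∞)
      (x.1, toIcoMod hc 0 (h x.1 x.2)) := (measurable_one.indicator hC).comp hE
  have hψ' : Measurable fun x : Ω × ℝ => (ψ x.1, x.2) := hψ.measurable.prodMap measurable_id
  calc ∫⁻ x in C, ENNReal.ofReal (g' x.1 x.2) ∂m.prod (volume.restrict (Ico 0 c))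
      = ∫⁻ ω, (∫⁻ θ in Ico 0 c, C.indicator (fun x => ENNReal.ofReal (g' x.1 x.2)) (ω, θ)) ∂m :=
        by
        rw [← lintegral_indicator hC]
        exact lintegral_prod _ (hg'm.ennreal_ofReal.indicator hC).aemeasurable
    _ = ∫⁻ ω, (∫⁻ θ in Ico 0 c, C.indicator 1 (ψ ω, toIcoMod hc 0 (h (ψ ω) θ))) ∂m := by
        simp_rw [hfiber]
        exact (hψ.lintegral_comp hEC.lintegral_prod_right').symm
    _ = _ := by
        have hB : Measurable fun x : Ω × ℝ => (ψ x.1, toIcoMod hc 0 (h (ψ x.1) x.2)) :=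
          hE.comp hψ'
        rw [← lintegral_indicator_one (hB hC)]
        exact (lintegral_prod _ (hEC.comp hψ').aemeasurable).symm

section TimeAverage

variable {X : Type*} {q p : ℝ → X → ℝ}

theorem ofReal_timeAverage (hq0 : ∀ s x, 0 ≤ q s x) (hqi : ∀ x, LocallyIntegrable fun s => q s x)
    (hp : ∀ t x, p t x = (1 / t) * ∫ s in (-t)..0, q s x) {t : ℝ} (ht : 0 < t) (x : X) :
    ENNReal.ofReal (p t x) =
      ENNReal.ofReal (1 / t) * ∫⁻ s in Ioc (-t) 0, ENNReal.ofReal (q s x) := by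
  rw [hp, ENNReal.ofReal_mul (by positivity),
    intervalIntegral.integral_of_le (neg_nonpos.2 ht.le), ofReal_integral_eq_lintegral_ofReal
      (((hqi x).integrableOn_isCompact isCompact_Icc).mono_set Ioc_subset_Icc_self)
      (ae_of_all _ (hq0 · x))]

variable [MeasurableSpace X] {ν : Measure X} {T : ℝ → X → X}

theorem measurable_timeAverage (hqm : Measurable (uncurry q))
    (hp : ∀ t x, p t x = (1 / t) * ∫ s in (-t)..0, q s x) (t : ℝ) : Measurable (p t) := by
  have hint : StronglyMeasurable fun x => ∫ s in uIoc (-t) 0, q s x :=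
    hqm.stronglyMeasurable.integral_prod_left
  simp_rw [funext (hp t), intervalIntegral.intervalIntegral_eq_integral_uIoc]
  have := hint.measurable
  fun_prop

variable [SFinite ν]

theorem setLIntegral_ofReal_timeAverage (hqm : Measurable (uncurry q)) (hq0 : ∀ s x, 0 ≤ q s x)
    (hqi : ∀ x, LocallyIntegrable fun s => q s x)
    (hp : ∀ t x, p t x = (1 / t) * ∫ s in (-t)..0, q s x)
    (hdensity : ∀ s C, MeasurableSet C → ∫⁻ x in C, ENNReal.ofReal (q s x) ∂ν = ν (T (-s) ⁻¹' C))
    {t : ℝ} (ht : 0 < t) {C : Set X} (hC : MeasurableSet C) :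
    ∫⁻ x in C, ENNReal.ofReal (p t x) ∂ν =
      ENNReal.ofReal (1 / t) * ∫⁻ s in Ioc (-t) 0, ν (T (-s) ⁻¹' C) := by
  simp_rw [ofReal_timeAverage hq0 hqi hp ht, lintegral_const_mul' _ _ ENNReal.ofReal_ne_top,
    ← hdensity _ _ hC]
  exact congrArg _ (lintegral_lintegral_swap
    (hqm.ennreal_ofReal.comp measurable_swap).aemeasurable)

theorem measurable_measure_preimage_of_density (hqm : Measurable (uncurry q))
    (hdensity : ∀ s C, MeasurableSet C → ∫⁻ x in C, ENNReal.ofReal (q s x) ∂ν = ν (T (-s) ⁻¹' C))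
    {C : Set X} (hC : MeasurableSet C) : Measurable fun s => ν (T (-s) ⁻¹' C) := by
  simp_rw [← hdensity _ _ hC]
  exact hqm.ennreal_ofReal.lintegral_prod_right'

variable [IsProbabilityMeasure ν]

theorem setIntegral_timeAverage (hqm : Measurable (uncurry q)) (hq0 : ∀ s x, 0 ≤ q s x)
    (hqi : ∀ x, LocallyIntegrable fun s => q s x)
    (hp : ∀ t x, p t x = (1 / t) * ∫ s in (-t)..0, q s x)
    (hdensity : ∀ s C, MeasurableSet C → ∫⁻ x in C, ENNReal.ofReal (q s x) ∂ν = ν (T (-s) ⁻¹' C))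
    {t : ℝ} (ht : 0 < t) {C : Set X} (hC : MeasurableSet C) :
    ∫ x in C, p t x ∂ν = (1 / t) * ∫ s in (-t)..0, (ν (T (-s) ⁻¹' C)).toReal := by
  have hp0 : ∀ x, 0 ≤ p t x := fun x => by
    rw [hp]; exact mul_nonneg (by positivity)
      (intervalIntegral.integral_nonneg (neg_nonpos.2 ht.le) fun s _ => hq0 s x)
  rw [integral_eq_lintegral_of_nonneg_ae (ae_of_all _ hp0)
      (measurable_timeAverage hqm hp t).aestronglyMeasurable,
    setLIntegral_ofReal_timeAverage hqm hq0 hqi hp hdensity ht hC, ENNReal.toReal_mul,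
    ENNReal.toReal_ofReal (by positivity), intervalIntegral.integral_of_le (neg_nonpos.2 ht.le),
    integral_toReal (measurable_measure_preimage_of_density hqm hdensity hC).aemeasurable
      (ae_of_all _ fun _ => measure_lt_top _ _)]

theorem integral_timeAverage (hqm : Measurable (uncurry q)) (hq0 : ∀ s x, 0 ≤ q s x)
    (hqi : ∀ x, LocallyIntegrable fun s => q s x)
    (hp : ∀ t x, p t x = (1 / t) * ∫ s in (-t)..0, q s x)
    (hdensity : ∀ s C, MeasurableSet C → ∫⁻ x in C, ENNReal.ofReal (q s x) ∂ν = ν (T (-s) ⁻¹' C))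
    {t : ℝ} (ht : 0 < t) : ∫ x, p t x ∂ν = 1 := by
  rw [← setIntegral_univ, setIntegral_timeAverage hqm hq0 hqi hp hdensity ht MeasurableSet.univ]
  simp only [preimage_univ, measure_univ, ENNReal.toReal_one, intervalIntegral.integral_const,
    sub_neg_eq_add, zero_add, smul_eq_mul, mul_one]
  exact one_div_mul_cancel ht.ne'

theorem lintegral_liminf_timeAverage_le (hqm : Measurable (uncurry q)) (hq0 : ∀ s x, 0 ≤ q s x)
    (hqi : ∀ x, LocallyIntegrable fun s => q s x)
    (hp : ∀ t x, p t x = (1 / t) * ∫ s in (-t)..0, q s x)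
    (hdensity : ∀ s C, MeasurableSet C → ∫⁻ x in C, ENNReal.ofReal (q s x) ∂ν = ν (T (-s) ⁻¹' C)) :
    ∫⁻ x, liminf (fun t => ENNReal.ofReal (p t x)) atTop ∂ν ≤ 1 := by
  have hone : ∀ t, 0 < t → ∫⁻ x, ENNReal.ofReal (p t x) ∂ν = 1 := fun t ht => by
    rw [← setLIntegral_univ, setLIntegral_ofReal_timeAverage hqm hq0 hqi hp hdensity ht
      MeasurableSet.univ]
    simp only [preimage_univ, measure_univ, setLIntegral_one, Real.volume_Ioc, sub_neg_eq_add,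
      zero_add]
    rw [← ENNReal.ofReal_mul (by positivity), one_div_mul_cancel ht.ne', ENNReal.ofReal_one]
  calc ∫⁻ x, liminf (fun t => ENNReal.ofReal (p t x)) atTop ∂ν
      ≤ liminf (fun t => ∫⁻ x, ENNReal.ofReal (p t x) ∂ν) atTop :=
        lintegral_liminf_le fun t => (measurable_timeAverage hqm hp t).ennreal_ofReal
    _ = 1 := by
        rw [liminf_congr ((eventually_gt_atTop 0).mono hone), liminf_const]

end TimeAverage

theorem setLIntegral_density_eq_measure_preimage {Ω : Type*} [TopologicalSpace Ω]
    [MeasurableSpace Ω] [BorelSpace Ω] {m : Measure Ω} [SFinite m] {φ : ℝ → Ω → Ω}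
    (hφc : Continuous fun p : ℝ × Ω => φ p.1 p.2)
    (hφ0 : ∀ ω, φ 0 ω = ω) (hφadd : ∀ s t ω, φ (s + t) ω = φ s (φ t ω))
    (hφinv : ∀ t, MeasurePreserving (φ t) m m)
    {Θ : ℝ → Ω → ℝ → ℝ}
    (hΘc : Continuous fun p : ℝ × Ω × ℝ => Θ p.1 p.2.1 p.2.2)
    (hΘ0 : ∀ ω θ, Θ 0 ω θ = θ)
    (hΘcoc : ∀ s t ω θ, Θ (s + t) ω θ = Θ s (φ t ω) (Θ t ω θ))
    (hΘper : ∀ s ω θ, Θ s ω (θ + Real.pi) = Θ s ω θ + Real.pi)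
    {q : ℝ → Ω → ℝ → ℝ} (hvar : ∀ s ω θ, HasDerivAt (fun x => Θ s ω x) (q s ω θ) θ)
    (hqpos : ∀ s ω θ, 0 < q s ω θ) (hqm : ∀ s, Measurable (uncurry (q s)))
    (s : ℝ) {C : Set (Ω × ℝ)} (hC : MeasurableSet C) :
    ∫⁻ x in C, ENNReal.ofReal (q s x.1 x.2) ∂m.prod (volume.restrict (Ico 0 Real.pi)) =
      m.prod (volume.restrict (Ico 0 Real.pi))
        ((fun x : Ω × ℝ => (φ (-s) x.1, toIcoMod Real.pi_pos 0 (Θ (-s) x.1 x.2))) ⁻¹' C) := by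
  have hφφ : ∀ u ω, φ (-u) (φ u ω) = ω := fun u ω => by rw [← hφadd, neg_add_cancel, hφ0]
  have hΘΘ : ∀ ω y, Θ s ω (Θ (-s) (φ s ω) y) = y := fun ω y => by
    have := hΘcoc s (-s) (φ s ω) y
    rwa [add_neg_cancel, hΘ0, hφφ, eq_comm] at this
  have hpre : (fun x : Ω × ℝ => (φ (-s) x.1, toIcoMod Real.pi_pos 0 (Θ (-s) x.1 x.2))) =
      fun x => (φ (-s) x.1, toIcoMod Real.pi_pos 0 (Θ (-s) (φ s (φ (-s) x.1)) x.2)) := by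
    funext x
    rw [show φ s (φ (-s) x.1) = x.1 by simpa using hφφ (-s) x.1]
  rw [hpre]
  refine setLIntegral_deriv_eq_measure_preimage (hφinv (-s)) Real.pi_pos (hvar s)
    (fun ω => strictMono_of_hasDerivAt_pos (hvar s ω) (hqpos s ω)) (hΘper s) hΘΘ (hqm s) ?_ hC
  exact (hΘc.comp (continuous_const.prodMk
    ((hφc.comp (continuous_const.prodMk continuous_fst)).prodMk continuous_snd))).measurable

theorem isProbabilityMeasure_smul_prod_restrict_Ico {Ω : Type*} [MeasurableSpace Ω]
    (m : Measure Ω) [IsProbabilityMeasure m] {c : ℝ} (hc : 0 < c) :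
    IsProbabilityMeasure ((ENNReal.ofReal c)⁻¹ • m.prod (volume.restrict (Ico 0 c))) := ⟨by
  rw [Measure.smul_apply, ← univ_prod_univ, Measure.prod_prod, measure_univ,
    Measure.restrict_apply_univ, Real.volume_Ico, sub_zero, one_mul, smul_eq_mul,
    ENNReal.inv_mul_cancel (ENNReal.ofReal_pos.2 hc).ne' ENNReal.ofReal_ne_top]⟩

theorem stmt14_general {Ω : Type*} [TopologicalSpace Ω] [MeasurableSpace Ω] [BorelSpace Ω]
    (m : Measure Ω) [IsProbabilityMeasure m]
    (φ : ℝ → Ω → Ω) (hφc : Continuous fun p : ℝ × Ω => φ p.1 p.2)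
    (hφ0 : ∀ ω, φ 0 ω = ω) (hφadd : ∀ s t ω, φ (s + t) ω = φ s (φ t ω))
    (hφinv : ∀ t, MeasurePreserving (φ t) m m)
    (Θ : ℝ → Ω → ℝ → ℝ)
    (hΘc : Continuous fun p : ℝ × Ω × ℝ => Θ p.1 p.2.1 p.2.2)
    (hΘ0 : ∀ ω θ, Θ 0 ω θ = θ)
    (hΘcoc : ∀ s t ω θ, Θ (s + t) ω θ = Θ s (φ t ω) (Θ t ω θ))
    (hΘper : ∀ s ω θ, Θ s ω (θ + Real.pi) = Θ s ω θ + Real.pi)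
    (G : Ω → ℝ → ℝ) (hGc : Continuous fun p : Ω × ℝ => G p.1 p.2)
    (q : ℝ → Ω → ℝ → ℝ)
    (hq : ∀ s ω θ, q s ω θ = Real.exp (∫ r in (0:ℝ)..s, G (φ r ω) (Θ r ω θ)))
    (hvar : ∀ s ω θ, HasDerivAt (fun x => Θ s ω x) (q s ω θ) θ)
    (p : ℝ → Ω → ℝ → ℝ)
    (hp : ∀ t ω θ, p t ω θ = (1 / t) * ∫ s in (-t)..(0:ℝ), q s ω θ)
    (ν : Measure (Ω × ℝ))
    (hν : ν = (ENNReal.ofReal Real.pi)⁻¹ •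
      (m.prod (volume.restrict (Set.Ico (0 : ℝ) Real.pi)))) :
    (∀ t : ℝ, 0 < t → ∀ C : Set (Ω × ℝ), MeasurableSet C →
      C ⊆ Set.univ ×ˢ Set.Ico (0 : ℝ) Real.pi →
      ∫ x in C, p t x.1 x.2 ∂ν =
        (1 / t) * ∫ s in (-t)..(0:ℝ),
          (ν ((fun x : Ω × ℝ => (φ (-s) x.1,
            Θ (-s) x.1 x.2 - Real.pi * (⌊Θ (-s) x.1 x.2 / Real.pi⌋ : ℝ))) ⁻¹' C)).toReal) ∧
    (∀ t : ℝ, 0 < t → ∫ x, p t x.1 x.2 ∂ν = 1) ∧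
    (∫⁻ x, Filter.liminf (fun t : ℝ => ENNReal.ofReal (p t x.1 x.2)) Filter.atTop ∂ν) ≤ 1 := by
  have hfloor : ∀ θ, θ - Real.pi * (⌊θ / Real.pi⌋ : ℝ) = toIcoMod Real.pi_pos 0 θ :=
    fun θ => (toIcoMod_zero_eq_sub_mul_floor Real.pi_pos θ).symm
  simp only [hfloor]
  have hqc : Continuous fun z : ℝ × Ω × ℝ => q z.1 z.2.1 z.2.2 := by
    simp only [hq]
    exact continuous_exp_intervalIntegral (F := fun r (x : Ω × ℝ) => G (φ r x.1) (Θ r x.1 x.2))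
      (hGc.comp ((hφc.comp (continuous_fst.prodMk (continuous_fst.comp continuous_snd))).prodMk
        hΘc))
  have hqm : Measurable (uncurry fun s (x : Ω × ℝ) => q s x.1 x.2) := hqc.measurable
  have hq0 : ∀ s ω θ, 0 < q s ω θ := fun s ω θ => hq s ω θ ▸ Real.exp_pos _
  have hqi : ∀ x : Ω × ℝ, LocallyIntegrable fun s => q s x.1 x.2 := fun x =>
    (hqc.comp (continuous_id.prodMk continuous_const)).locallyIntegrable
  set T : ℝ → Ω × ℝ → Ω × ℝ := fun u x => (φ u x.1, toIcoMod Real.pi_pos 0 (Θ u x.1 x.2))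
  have hdensity : ∀ s C, MeasurableSet C →
      ∫⁻ x in C, ENNReal.ofReal (q s x.1 x.2) ∂ν = ν (T (-s) ⁻¹' C) :=
    fun s C hC => by
      rw [hν, Measure.restrict_smul, lintegral_smul_measure, Measure.smul_apply,
        setLIntegral_density_eq_measure_preimage hφc hφ0 hφadd hφinv hΘc hΘ0 hΘcoc hΘper hvar hq0
          (fun s => (hqc.comp (continuous_const.prodMk continuous_id)).measurable) s hC]
  have : IsProbabilityMeasure ν := hν ▸ isProbabilityMeasure_smul_prod_restrict_Ico m Real.pi_pos
  have hp' : ∀ t (x : Ω × ℝ), p t x.1 x.2 = (1 / t) * ∫ s in (-t)..0, q s x.1 x.2 :=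
    fun t x => hp t x.1 x.2
  have hq0' : ∀ s (x : Ω × ℝ), 0 ≤ q s x.1 x.2 := fun s x => (hq0 s x.1 x.2).le
  exact ⟨fun t ht C hC _ => setIntegral_timeAverage hqm hq0' hqi hp' hdensity ht hC,
    fun t ht => integral_timeAverage hqm hq0' hqi hp' hdensity ht,
    lintegral_liminf_timeAverage_le hqm hq0' hqi hp' hdensity⟩

/-- Let `p_t(ω,θ) = (1/t) ∫_{-t}^0 exp(∫₀ˢ (∂f/∂θ)(σ̃(r,ω,θ)) dr) ds` for the
projective flow `σ̃` (written here through its angular lift `Θ` over the base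
flow `φ`, with `∂f/∂θ = G`). Then for every measurable `C ⊆ Ω×ℙ` and `t > 0`,
`∫_C p_t d(m×l_ℙ) = (1/t) ∫_{-t}^0 (m×l_ℙ)(σ̃_s(C)) ds`; in particular
`∫ p_t d(m×l_ℙ) = 1`, and `p = liminf_{t→∞} p_t` satisfies `∫ p ≤ 1`,
so `p ∈ L¹(Ω×ℙ, m×l_ℙ)`. The projective line `ℙ ≅ ℝ/πℤ` is realized as
`[0,π) ⊆ ℝ` with normalized Lebesgue measure, and `σ̃_s(C)` as the preimage of
`C` under the normalized time-`(-s)` map. -/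
theorem stmt14 {Ω : Type*} [TopologicalSpace Ω] [MeasurableSpace Ω] [BorelSpace Ω]
    (m : Measure Ω) [IsProbabilityMeasure m]
    (φ : ℝ → Ω → Ω) (hφc : Continuous fun p : ℝ × Ω => φ p.1 p.2)
    (hφ0 : ∀ ω, φ 0 ω = ω) (hφadd : ∀ s t ω, φ (s + t) ω = φ s (φ t ω))
    (hφinv : ∀ t, MeasurePreserving (φ t) m m)
    (Θ : ℝ → Ω → ℝ → ℝ)
    (hΘc : Continuous fun p : ℝ × Ω × ℝ => Θ p.1 p.2.1 p.2.2)
    (hΘ0 : ∀ ω θ, Θ 0 ω θ = θ)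
    (hΘcoc : ∀ s t ω θ, Θ (s + t) ω θ = Θ s (φ t ω) (Θ t ω θ))
    (hΘper : ∀ s ω θ, Θ s ω (θ + Real.pi) = Θ s ω θ + Real.pi)
    (G : Ω → ℝ → ℝ) (hGc : Continuous fun p : Ω × ℝ => G p.1 p.2)
    (hGper : ∀ ω θ, G ω (θ + Real.pi) = G ω θ)
    (q : ℝ → Ω → ℝ → ℝ)
    (hq : ∀ s ω θ, q s ω θ = Real.exp (∫ r in (0:ℝ)..s, G (φ r ω) (Θ r ω θ)))
    (hvar : ∀ s ω θ, HasDerivAt (fun x => Θ s ω x) (q s ω θ) θ)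
    (p : ℝ → Ω → ℝ → ℝ)
    (hp : ∀ t ω θ, p t ω θ = (1 / t) * ∫ s in (-t)..(0:ℝ), q s ω θ)
    (ν : Measure (Ω × ℝ))
    (hν : ν = (ENNReal.ofReal Real.pi)⁻¹ •
      (m.prod (volume.restrict (Set.Ico (0 : ℝ) Real.pi)))) :
    (∀ t : ℝ, 0 < t → ∀ C : Set (Ω × ℝ), MeasurableSet C →
      C ⊆ Set.univ ×ˢ Set.Ico (0 : ℝ) Real.pi →
      ∫ x in C, p t x.1 x.2 ∂ν =
        (1 / t) * ∫ s in (-t)..(0:ℝ),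
          (ν ((fun x : Ω × ℝ => (φ (-s) x.1,
            Θ (-s) x.1 x.2 - Real.pi * (⌊Θ (-s) x.1 x.2 / Real.pi⌋ : ℝ))) ⁻¹' C)).toReal) ∧
    (∀ t : ℝ, 0 < t → ∫ x, p t x.1 x.2 ∂ν = 1) ∧
    (∫⁻ x, Filter.liminf (fun t : ℝ => ENNReal.ofReal (p t x.1 x.2)) Filter.atTop ∂ν) ≤ 1 :=
  stmt14_general m φ hφc hφ0 hφadd hφinv Θ hΘc hΘ0 hΘcoc hΘper G hGc q hq hvar p hp ν hν
end

section
/- With p_t as above, for 0 < l < t one has the cocycle identity p_t(σ̃(l,ω,θ)) · exp(∫₀ˡ (∂f/∂θ)(σ̃(r,ω,θ)) dr) = ((t−l)/t) p_{t−l}(ω,θ) + (1/t) ∫₀ˡ exp(∫₀ˢ (∂f/∂θ)(σ̃(r,ω,θ)) dr) ds. Consequently p := liminf_{t→∞} p_t satisfies p(σ̃(l,ω,θ)) = p(ω,θ) exp(−∫₀ˡ (∂f/∂θ)(σ̃(s,ω,θ)) ds) for all l ∈ ℝ and all (ω,θ). -/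
/-!
Along an orbit the weight `q_s(x) = exp ∫₀ˢ G(ψ_r x) dr` is a multiplicative cocycle,
`q_s(ψ_l x) = q_{s+l}(x) / q_l(x)`. Hence `p_t(ψ_l x) q_l(x)` is the average of `q(x)` over the
window `[-(t-l), l]` instead of `[-t, 0]`, which is the cocycle identity. In it, the factor
`(t-l)/t` tends to `1`, the boundary term `(1/t) ∫₀ˡ q` tends to `0` and `p_{t-l}` is a time shift
of `p_t`; none of the three changes a liminf, which gives the transformation law of `p`.
-/

open Filter Topology ENNReal

namespace ENNReal

variable {ι : Type*} {f : Filter ι} [f.NeBot]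

theorem liminf_mul_of_tendsto {u v : ι → ℝ≥0∞} {c : ℝ≥0∞} (hu : Tendsto u f (𝓝 c))
    (hc₀ : c ≠ 0) (hc : c ≠ ∞) : liminf (u * v) f = c * liminf v f := by
  refine le_antisymm ?_ ?_
  · rw [← hu.limsup_eq]
    exact liminf_mul_le (.inl (hu.limsup_eq ▸ hc₀)) (.inl (hu.limsup_eq ▸ hc))
  · rw [← hu.liminf_eq]
    exact le_liminf_mul

theorem liminf_ofReal_eq_of_eventually_eq_mul_add {φ χ u w : ι → ℝ} {c : ℝ}
    (hc : 0 < c) (hu : Tendsto u f (𝓝 c)) (hw : Tendsto w f (𝓝 0))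
    (h : ∀ᶠ i in f, φ i = u i * χ i + w i) :
    liminf (fun i ↦ ENNReal.ofReal (φ i)) f =
      ENNReal.ofReal c * liminf (fun i ↦ ENNReal.ofReal (χ i)) f := by
  set U := fun i ↦ ENNReal.ofReal (u i)
  set X := fun i ↦ ENNReal.ofReal (χ i)
  set Φ := fun i ↦ ENNReal.ofReal (φ i)
  have hUX : ∀ᶠ i in f, ENNReal.ofReal (u i * χ i) = (U * X) i := by
    filter_upwards [hu.eventually (lt_mem_nhds hc)] with i hi
    exact ENNReal.ofReal_mul hi.le
  rw [← liminf_mul_of_tendsto (ENNReal.tendsto_ofReal hu) (by simpa using hc) ofReal_ne_top]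
  -- `w` may be negative, so each direction uses its own instance of `ofReal_add_le`.
  refine le_antisymm ?_ ?_
  · calc liminf Φ f ≤ liminf (U * X + fun i ↦ ENNReal.ofReal (w i)) f := by
          refine liminf_le_liminf ?_
          filter_upwards [h, hUX] with i hi hi'
          rw [Pi.add_apply, ← hi']
          show ENNReal.ofReal (φ i) ≤ _
          rw [hi]
          exact ofReal_add_le
      _ = liminf (U * X) f :=
          liminf_add_of_right_tendsto_zero (by simpa using ENNReal.tendsto_ofReal hw) _
  · calc liminf (U * X) f ≤ liminf (Φ + fun i ↦ ENNReal.ofReal (-w i)) f := by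
          refine liminf_le_liminf ?_
          filter_upwards [h, hUX] with i hi hi'
          rw [Pi.add_apply, ← hi', show u i * χ i = φ i + -w i by rw [hi]; ring]
          exact ofReal_add_le
      _ = liminf Φ f :=
          liminf_add_of_right_tendsto_zero (by simpa using ENNReal.tendsto_ofReal hw.neg) _

end ENNReal

noncomputable section

variable {X : Type*} (ψ : ℝ → X → X) (G : X → ℝ)

def orbitWeight (s : ℝ) (x : X) : ℝ := Real.exp (∫ r in (0 : ℝ)..s, G (ψ r x))

def orbitAverage (t : ℝ) (x : X) : ℝ := (1 / t) * ∫ s in -t..0, orbitWeight ψ G s x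

end

section

variable {X : Type*} {ψ : ℝ → X → X} {G : X → ℝ} {x : X}

theorem continuous_orbitWeight (hG : Continuous fun r ↦ G (ψ r x)) :
    Continuous fun s ↦ orbitWeight ψ G s x :=
  (intervalIntegral.continuous_primitive (fun _ _ ↦ hG.intervalIntegrable _ _) 0).rexp

theorem orbitWeight_flow (hψ : ∀ s t x, ψ (s + t) x = ψ s (ψ t x))
    (hG : Continuous fun r ↦ G (ψ r x)) (l s : ℝ) :
    orbitWeight ψ G s (ψ l x) = orbitWeight ψ G (s + l) x / orbitWeight ψ G l x := by
  have hshift : ∫ r in (0 : ℝ)..s, G (ψ r (ψ l x)) =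
      (∫ r in (0 : ℝ)..s + l, G (ψ r x)) - ∫ r in (0 : ℝ)..l, G (ψ r x) := by
    simp only [← hψ]
    rw [intervalIntegral.integral_comp_add_right (fun r ↦ G (ψ r x)), zero_add,
      intervalIntegral.integral_interval_sub_left (hG.intervalIntegrable _ _)
        (hG.intervalIntegrable _ _)]
  rw [orbitWeight, hshift, Real.exp_sub]
  rfl

theorem integral_orbitWeight_flow (hψ : ∀ s t x, ψ (s + t) x = ψ s (ψ t x))
    (hG : Continuous fun r ↦ G (ψ r x)) (l t : ℝ) :
    ∫ s in -t..0, orbitWeight ψ G s (ψ l x) =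
      ((∫ s in -(t - l)..0, orbitWeight ψ G s x) + ∫ s in (0 : ℝ)..l, orbitWeight ψ G s x) /
        orbitWeight ψ G l x := by
  simp only [orbitWeight_flow hψ hG, intervalIntegral.integral_div]
  rw [intervalIntegral.integral_comp_add_right (fun s ↦ orbitWeight ψ G s x),
    intervalIntegral.integral_add_adjacent_intervals
      ((continuous_orbitWeight hG).intervalIntegrable _ _)
      ((continuous_orbitWeight hG).intervalIntegrable _ _)]
  ring_nf

theorem orbitAverage_flow_mul_orbitWeight (hψ : ∀ s t x, ψ (s + t) x = ψ s (ψ t x))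
    (hG : Continuous fun r ↦ G (ψ r x)) (l t : ℝ) :
    orbitAverage ψ G t (ψ l x) * orbitWeight ψ G l x =
      ((t - l) / t) * orbitAverage ψ G (t - l) x +
        (1 / t) * ∫ s in (0 : ℝ)..l, orbitWeight ψ G s x := by
  rw [orbitAverage, orbitAverage, integral_orbitWeight_flow hψ hG]
  have hw : orbitWeight ψ G l x ≠ 0 := (Real.exp_pos _).ne'
  rcases eq_or_ne t l with rfl | htl
  · simp [div_mul_cancel₀ _ hw, mul_assoc]
  · field_simp [sub_ne_zero.2 htl]

theorem liminf_orbitAverage_flow (hψ : ∀ s t x, ψ (s + t) x = ψ s (ψ t x))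
    (hG : Continuous fun r ↦ G (ψ r x)) (l : ℝ) :
    liminf (fun t ↦ ENNReal.ofReal (orbitAverage ψ G t (ψ l x))) atTop =
      liminf (fun t ↦ ENNReal.ofReal (orbitAverage ψ G t x)) atTop *
        ENNReal.ofReal (Real.exp (-∫ s in (0 : ℝ)..l, G (ψ s x))) := by
  set w := orbitWeight ψ G l x
  set C := ∫ s in (0 : ℝ)..l, orbitWeight ψ G s x
  have hw : 0 < w := Real.exp_pos _
  have hu : Tendsto (fun t : ℝ ↦ (1 - l / t) / w) atTop (𝓝 (1 / w)) := by
    simpa using ((tendsto_const_nhds.div_atTop tendsto_id).const_sub 1).div_const w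
  have hC : Tendsto (fun t : ℝ ↦ C / w * t⁻¹) atTop (𝓝 0) := by
    simpa using tendsto_inv_atTop_zero.const_mul (C / w)
  have hcocycle : ∀ᶠ t in atTop, orbitAverage ψ G t (ψ l x) =
      (1 - l / t) / w * orbitAverage ψ G (t - l) x + C / w * t⁻¹ := by
    filter_upwards [eventually_ne_atTop 0] with t ht
    rw [eq_div_iff hw.ne' |>.mpr (orbitAverage_flow_mul_orbitWeight hψ hG l t)]
    field_simp
    simp only [C]
  have hshift : liminf (fun t ↦ ENNReal.ofReal (orbitAverage ψ G (t - l) x)) atTop =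
      liminf (fun t ↦ ENNReal.ofReal (orbitAverage ψ G t x)) atTop :=
    (liminf_comp (fun t ↦ ENNReal.ofReal (orbitAverage ψ G t x)) (· - l) atTop).trans
      (congrArg _ (map_sub_atTop_eq l))
  rw [ENNReal.liminf_ofReal_eq_of_eventually_eq_mul_add (by positivity) hu hC hcocycle, hshift,
    mul_comm, Real.exp_neg, one_div]
  simp only [w, orbitWeight]

end

theorem stmt15_general {X : Type*} [TopologicalSpace X]
    (ψ : ℝ → X → X) (hψc : Continuous fun p : ℝ × X => ψ p.1 p.2)
    (hψadd : ∀ s t x, ψ (s + t) x = ψ s (ψ t x))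
    (G : X → ℝ) (hG : Continuous G)
    (q : ℝ → X → ℝ) (hq : ∀ s x, q s x = Real.exp (∫ r in (0:ℝ)..s, G (ψ r x)))
    (p : ℝ → X → ℝ) (hp : ∀ t x, p t x = (1 / t) * ∫ s in (-t)..(0:ℝ), q s x) :
    (∀ (x : X) (l t : ℝ), 0 < l → l < t →
      p t (ψ l x) * Real.exp (∫ r in (0:ℝ)..l, G (ψ r x)) =
        ((t - l) / t) * p (t - l) x + (1 / t) * ∫ s in (0:ℝ)..l, q s x) ∧
    (∀ (x : X) (l : ℝ),
      Filter.liminf (fun t : ℝ => ENNReal.ofReal (p t (ψ l x))) Filter.atTop =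
        Filter.liminf (fun t : ℝ => ENNReal.ofReal (p t x)) Filter.atTop *
          ENNReal.ofReal (Real.exp (-∫ s in (0:ℝ)..l, G (ψ s x)))) := by
  have hGψ : ∀ x, Continuous fun r ↦ G (ψ r x) := fun x ↦
    hG.comp (hψc.comp (continuous_id.prodMk continuous_const))
  obtain rfl : q = orbitWeight ψ G := funext₂ hq
  obtain rfl : p = orbitAverage ψ G := funext₂ hp
  exact ⟨fun x l t _ _ ↦ orbitAverage_flow_mul_orbitWeight hψadd (hGψ x) l t,
    fun x l ↦ liminf_orbitAverage_flow hψadd (hGψ x) l⟩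

/-- Cocycle identity for `p_t(x) = (1/t) ∫_{-t}^0 exp(∫₀ˢ G(ψ_r x) dr) ds`:
for `0 < l < t`,
`p_t(ψ_l x) · exp(∫₀ˡ G(ψ_r x) dr) = ((t-l)/t) p_{t-l}(x) + (1/t) ∫₀ˡ q_s(x) ds`.
Consequently `p := liminf_{t→∞} p_t` satisfies
`p(ψ_l x) = p(x) · exp(-∫₀ˡ G(ψ_s x) ds)` for all `l ∈ ℝ` and all `x`
(the liminf being taken in `[0,∞]`). -/
theorem stmt15 {X : Type*} [TopologicalSpace X]
    (ψ : ℝ → X → X) (hψc : Continuous fun p : ℝ × X => ψ p.1 p.2)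
    (hψ0 : ∀ x, ψ 0 x = x) (hψadd : ∀ s t x, ψ (s + t) x = ψ s (ψ t x))
    (G : X → ℝ) (hG : Continuous G)
    (q : ℝ → X → ℝ) (hq : ∀ s x, q s x = Real.exp (∫ r in (0:ℝ)..s, G (ψ r x)))
    (p : ℝ → X → ℝ) (hp : ∀ t x, p t x = (1 / t) * ∫ s in (-t)..(0:ℝ), q s x) :
    (∀ (x : X) (l t : ℝ), 0 < l → l < t →
      p t (ψ l x) * Real.exp (∫ r in (0:ℝ)..l, G (ψ r x)) =
        ((t - l) / t) * p (t - l) x + (1 / t) * ∫ s in (0:ℝ)..l, q s x) ∧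
    (∀ (x : X) (l : ℝ),
      Filter.liminf (fun t : ℝ => ENNReal.ofReal (p t (ψ l x))) Filter.atTop =
        Filter.liminf (fun t : ℝ => ENNReal.ofReal (p t x)) Filter.atTop *
          ENNReal.ofReal (Real.exp (-∫ s in (0:ℝ)..l, G (ψ s x)))) :=
  stmt15_general ψ hψc hψadd G hG q hq p hp
end

section
/- Suppose all solutions of all systems of the family y' = Ã(ω·t) y (with tr Ã ≡ 0, Ω compact, flow minimal) are bounded, uniformly: c := sup_{t,ω} |U(t,ω)| < ∞. Then they are also uniformly bounded away from zero (since det U(t,ω) = 1, the inverse matrices are uniformly bounded), and consequently the skew-product flow on Ω×S¹ induced by the angular equation is distal. -/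
/-!
Applying the cocycle identity at `s = -t` shows that `U(-t, ω·t)` inverts `U(t, ω)`, so the
bound `‖U‖ ≤ c` gives `‖v‖ ≤ c ‖U(t,ω) v‖` as well. For unit vectors `u ≠ u'` and positive
scalars `α, β`, `‖α u - β u'‖² = (α - β)² + α β ‖u - u'‖²`; with `α = ‖U u‖⁻¹, β = ‖U u'‖⁻¹ ≥ c⁻¹`
and one more application of the inverse, the normalized images of `u` and `u'` stay at distance
at least `‖u - u'‖ / c²` for all times.
-/

theorem ContinuousLinearMap.norm_le_mul_norm_apply_of_comp_eq_id {𝕜 E F : Type*}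
    [NontriviallyNormedField 𝕜] [SeminormedAddCommGroup E] [SeminormedAddCommGroup F]
    [NormedSpace 𝕜 E] [NormedSpace 𝕜 F] {A : E →L[𝕜] F} {B : F →L[𝕜] E}
    (hBA : B.comp A = ContinuousLinearMap.id 𝕜 E) {c : ℝ} (hB : ‖B‖ ≤ c) (v : E) :
    ‖v‖ ≤ c * ‖A v‖ :=
  calc ‖v‖ = ‖B (A v)‖ := by rw [← ContinuousLinearMap.comp_apply, hBA, id_apply]
    _ ≤ c * ‖A v‖ := B.le_of_opNorm_le hB _

section InnerProductSpace

variable {E : Type*} [NormedAddCommGroup E] [InnerProductSpace ℝ E] {u u' : E}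

theorem norm_smul_sub_smul_sq_of_norm_eq_one (hu : ‖u‖ = 1) (hu' : ‖u'‖ = 1) (α β : ℝ) :
    ‖α • u - β • u'‖ ^ 2 = (α - β) ^ 2 + α * β * ‖u - u'‖ ^ 2 := by
  rw [norm_sub_sq_real, norm_sub_sq_real, norm_smul, norm_smul, real_inner_smul_left,
    real_inner_smul_right, hu, hu', Real.norm_eq_abs, Real.norm_eq_abs, mul_one, mul_one,
    sq_abs, sq_abs]
  ring

theorem mul_norm_sub_le_norm_smul_sub_smul (hu : ‖u‖ = 1) (hu' : ‖u'‖ = 1) {m α β : ℝ}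
    (hm : 0 ≤ m) (hα : m ≤ α) (hβ : m ≤ β) :
    m * ‖u - u'‖ ≤ ‖α • u - β • u'‖ := by
  refine (pow_le_pow_iff_left₀ (by positivity) (norm_nonneg _) two_ne_zero).mp ?_
  have hαβ : m ^ 2 * ‖u - u'‖ ^ 2 ≤ α * β * ‖u - u'‖ ^ 2 := by
    gcongr
    rw [sq]
    exact mul_le_mul hα hβ hm (hm.trans hα)
  rw [norm_smul_sub_smul_sq_of_norm_eq_one hu hu', mul_pow]
  nlinarith [sq_nonneg (α - β)]

theorem norm_sub_div_sq_le_norm_normalize_apply_sub {F : Type*} [NormedAddCommGroup F]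
    [NormedSpace ℝ F] {A : E →L[ℝ] F} {B : F →L[ℝ] E}
    (hBA : B.comp A = ContinuousLinearMap.id ℝ E) {c : ℝ} (hA : ‖A‖ ≤ c) (hB : ‖B‖ ≤ c)
    (hu : ‖u‖ = 1) (hu' : ‖u'‖ = 1) :
    ‖u - u'‖ / c ^ 2 ≤ ‖‖A u‖⁻¹ • A u - ‖A u'‖⁻¹ • A u'‖ := by
  have lower := ContinuousLinearMap.norm_le_mul_norm_apply_of_comp_eq_id hBA hB
  have hc : 0 < c := by
    have h := lower u
    rw [hu] at h
    exact lt_of_le_of_ne ((norm_nonneg A).trans hA) (by rintro rfl; linarith)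
  have inv_le_inv_norm : ∀ {v : E}, ‖v‖ = 1 → c⁻¹ ≤ ‖A v‖⁻¹ := fun {v} hv => by
    have hpos : 0 < ‖A v‖ := by
      have h := lower v
      rw [hv] at h
      nlinarith [norm_nonneg (A v)]
    exact inv_anti₀ hpos (by simpa [hv] using A.le_of_opNorm_le hA v)
  set w := ‖A u‖⁻¹ • A u - ‖A u'‖⁻¹ • A u'
  have hBw : B w = ‖A u‖⁻¹ • u - ‖A u'‖⁻¹ • u' := by
    simp only [w, map_sub, map_smul, ← ContinuousLinearMap.comp_apply, hBA,
      ContinuousLinearMap.id_apply]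
  calc ‖u - u'‖ / c ^ 2 = c⁻¹ * ‖u - u'‖ / c := by field_simp
    _ ≤ ‖B w‖ / c := by
      rw [hBw]
      gcongr
      exact mul_norm_sub_le_norm_smul_sub_smul hu hu' (by positivity)
        (inv_le_inv_norm hu) (inv_le_inv_norm hu')
    _ ≤ ‖w‖ := div_le_of_le_mul₀ hc.le (norm_nonneg w)
      ((B.le_of_opNorm_le hB w).trans_eq (mul_comm _ _))

end InnerProductSpace

theorem cocycle_neg_comp_self {Ω R M : Type*} [Semiring R] [TopologicalSpace M]
    [AddCommMonoid M] [Module R M] (φ : ℝ → Ω → Ω) (L : ℝ → Ω → M →L[R] M)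
    (hL0 : ∀ ω, L 0 ω = ContinuousLinearMap.id R M)
    (hLcoc : ∀ s t ω, L (s + t) ω = (L s (φ t ω)).comp (L t ω)) (t : ℝ) (ω : Ω) :
    (L (-t) (φ t ω)).comp (L t ω) = ContinuousLinearMap.id R M := by
  rw [← hLcoc, neg_add_cancel, hL0]

theorem stmt16_general {Ω : Type*} (φ : ℝ → Ω → Ω)
    (L : ℝ → Ω → EuclideanSpace ℝ (Fin 2) →L[ℝ] EuclideanSpace ℝ (Fin 2))
    (hL0 : ∀ ω, L 0 ω = ContinuousLinearMap.id ℝ (EuclideanSpace ℝ (Fin 2)))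
    (hLcoc : ∀ s t ω, L (s + t) ω = (L s (φ t ω)).comp (L t ω))
    (c : ℝ) (hc : ∀ t ω, ‖L t ω‖ ≤ c) :
    (∀ (t : ℝ) (ω : Ω) (v : EuclideanSpace ℝ (Fin 2)), ‖v‖ ≤ c * ‖L t ω v‖) ∧
    (∀ (ω : Ω) (u u' : EuclideanSpace ℝ (Fin 2)), ‖u‖ = 1 → ‖u'‖ = 1 → u ≠ u' →
      ∃ ε > 0, ∀ t : ℝ,
        ε ≤ ‖(‖L t ω u‖)⁻¹ • L t ω u - (‖L t ω u'‖)⁻¹ • L t ω u'‖) := by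
  have hinv := cocycle_neg_comp_self φ L hL0 hLcoc
  refine ⟨fun t ω =>
      ContinuousLinearMap.norm_le_mul_norm_apply_of_comp_eq_id (hinv t ω) (hc _ _),
    fun ω u u' hu hu' hne => ⟨‖u - u'‖ / c ^ 2, ?_, fun t =>
      norm_sub_div_sq_le_norm_normalize_apply_sub (hinv t ω) (hc _ _) (hc _ _) hu hu'⟩⟩
  have hc1 : 1 ≤ c := by simpa [hL0] using hc 0 ω
  have : 0 < ‖u - u'‖ := norm_pos_iff.mpr (sub_ne_zero.mpr hne)
  positivity

/-- If the fundamental solutions `U(t,ω)` of the zero-trace family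
`y' = Ã(ω·t) y` are uniformly bounded, `‖U(t,ω)‖ ≤ c`, and `det U(t,ω) = 1`,
then they are also uniformly bounded away from zero (`‖v‖ ≤ c ‖U(t,ω)v‖`),
and consequently the induced angular flow on `Ω × S¹` is distal: for any two
distinct unit vectors the normalized images stay at distance bounded below. -/
theorem stmt16 {Ω : Type*} (φ : ℝ → Ω → Ω)
    (hφ0 : ∀ ω, φ 0 ω = ω) (hφadd : ∀ s t ω, φ (s + t) ω = φ s (φ t ω))
    (L : ℝ → Ω → EuclideanSpace ℝ (Fin 2) →L[ℝ] EuclideanSpace ℝ (Fin 2))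
    (hL0 : ∀ ω, L 0 ω = ContinuousLinearMap.id ℝ (EuclideanSpace ℝ (Fin 2)))
    (hLcoc : ∀ s t ω, L (s + t) ω = (L s (φ t ω)).comp (L t ω))
    (hdet : ∀ t ω, LinearMap.det
      ((L t ω : EuclideanSpace ℝ (Fin 2) →ₗ[ℝ] EuclideanSpace ℝ (Fin 2))) = 1)
    (c : ℝ) (hc : ∀ t ω, ‖L t ω‖ ≤ c) :
    (∀ (t : ℝ) (ω : Ω) (v : EuclideanSpace ℝ (Fin 2)), ‖v‖ ≤ c * ‖L t ω v‖) ∧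
    (∀ (ω : Ω) (u u' : EuclideanSpace ℝ (Fin 2)), ‖u‖ = 1 → ‖u'‖ = 1 → u ≠ u' →
      ∃ ε > 0, ∀ t : ℝ,
        ε ≤ ‖(‖L t ω u‖)⁻¹ • L t ω u - (‖L t ω u'‖)⁻¹ • L t ω u'‖) :=
  stmt16_general φ L hL0 hLcoc c hc
end

section
/- Let (Ω,σ,ℝ) be a minimal flow, and let Ω⁺ be the set of ω such that all solutions of y' = A(ω·t)y are bounded on (−∞,0]. If Ω⁺ ≠ Ω, then for every ω₀ ∉ Ω⁺ the set of directions θ ∈ ℙ¹ whose corresponding solution is bounded on ℝ⁻ contains at most one point; consequently the set D = {σ̃(t,ω₀,θ) : t ∈ ℝ, θ ≠ θ₀} is dense in Ω×ℙ and the upper semicontinuous function β̃ (which vanishes exactly where the backward solution is unbounded) vanishes on a residual subset of Ω×ℙ; hence Ω⁺ is of the first Baire category. -/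
/-!
Backward-bounded solutions over `ω` form a subspace `backwardBounded L ω`, and boundedness of
`L t ω v` over `φ t ω` pulls back to boundedness of `v` over `ω`. In the plane two independent
backward-bounded directions make every solution backward bounded, so over `ω₀ ∉ Ω⁺` at most one
direction `θ₀` is backward bounded and `β̃` vanishes along the orbits of all `(ω₀, θ)` with
`θ ≠ θ₀`. Their union is dense, as the base orbit of `ω₀` is dense and `ℙ¹ \ {θ₀}` is dense in
`ℙ¹`; an upper semicontinuous function vanishing on a dense set vanishes on a residual set.
By Banach–Steinhaus, `Ω⁺` is the union of the closed sets `{ω | ∀ t ≤ 0, ‖L t ω‖ ≤ n}`, which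
all miss the dense orbit of `ω₀`, so `Ω⁺` is meagre.
-/

open Set Filter Topology

section Baire

variable {X : Type*} [TopologicalSpace X]

theorem isMeagre_iUnion_of_isClosed_of_dense_compl {ι : Type*} [Countable ι] {F : ι → Set X}
    (hF : ∀ i, IsClosed (F i)) (hd : Dense (⋃ i, F i)ᶜ) : IsMeagre (⋃ i, F i) :=
  isMeagre_iUnion fun i => IsNowhereDense.isMeagre <| (hF i).isNowhereDense_iff.2 <|
    interior_eq_empty_iff_dense_compl.2 <| hd.mono <| compl_subset_compl.2 <| subset_iUnion F i

theorem UpperSemicontinuous.eventually_residual_le {f : X → ℝ} (hf : UpperSemicontinuous f)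
    {s : Set X} (hs : Dense s) {c : ℝ} (h : ∀ x ∈ s, f x ≤ c) :
    ∀ᶠ x in residual X, f x ≤ c := by
  have hlt : ∀ n : ℕ, ∀ᶠ x in residual X, f x < c + 1 / (n + 1) := fun n =>
    residual_of_dense_open (upperSemicontinuous_iff_isOpen_preimage.1 hf _)
      (hs.mono fun x hx => (h x hx).trans_lt (lt_add_of_pos_right c (by positivity)))
  filter_upwards [eventually_countable_forall.2 hlt] with x hx
  refine le_of_forall_pos_lt_add fun ε hε => ?_
  obtain ⟨n, hn⟩ := exists_nat_one_div_lt hε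
  exact (hx n).trans (by linarith)

end Baire

theorem Continuous.exists_forall_le_of_Iic {f : ℝ → ℝ} (hf : Continuous f) {a M : ℝ}
    (h : ∀ t ≤ a, f t ≤ M) (b : ℝ) : ∃ M', ∀ t ≤ b, f t ≤ M' := by
  have hbdd : BddAbove (f '' (Iic a ∪ Icc a b)) := by
    rw [image_union]
    exact BddAbove.union ⟨M, forall_mem_image.2 h⟩ (isCompact_Icc.bddAbove_image hf.continuousOn)
  obtain ⟨M', hM'⟩ := hbdd
  refine ⟨M', fun t ht => hM' (mem_image_of_mem f ?_)⟩
  rcases le_total t a with hta | hat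
  · exact Or.inl hta
  · exact Or.inr ⟨hat, ht⟩

theorem Submodule.eq_top_of_linearIndependent_pair {K V : Type*} [DivisionRing K]
    [AddCommGroup V] [Module K V] (hV : Module.finrank K V = 2) {p : Submodule K V} {v w : V}
    (hvw : LinearIndependent K ![v, w]) (hv : v ∈ p) (hw : w ∈ p) : p = ⊤ := by
  refine eq_top_iff.2 ((hvw.span_eq_top_of_card_eq_finrank (by simp [hV])).ge.trans
    (Submodule.span_le.2 ?_))
  rintro _ ⟨i, rfl⟩
  fin_cases i
  exacts [hv, hw]

instance AddCircle.nontrivial_real {p : ℝ} [hp : Fact (0 < p)] : Nontrivial (AddCircle p) :=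
  ⟨⟨((p / 2 : ℝ) : AddCircle p), 0, by
    rw [Ne, AddCircle.coe_eq_zero_iff_of_mem_Ico ⟨by linarith [hp.out], by linarith [hp.out]⟩]
    linarith [hp.out]⟩⟩

section Cocycle

variable {Ω E : Type*} [NormedAddCommGroup E] [NormedSpace ℝ E]

def backwardBounded (L : ℝ → Ω → E →L[ℝ] E) (ω : Ω) : Submodule ℝ E where
  carrier := {v | ∃ M, ∀ t ≤ (0 : ℝ), ‖L t ω v‖ ≤ M}
  add_mem' := by
    rintro v w ⟨M, hM⟩ ⟨N, hN⟩
    refine ⟨M + N, fun t ht => ?_⟩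
    rw [map_add]
    exact (norm_add_le _ _).trans (add_le_add (hM t ht) (hN t ht))
  zero_mem' := ⟨0, fun t _ => by simp⟩
  smul_mem' := by
    rintro c v ⟨M, hM⟩
    refine ⟨‖c‖ * M, fun t ht => ?_⟩
    rw [map_smul, norm_smul]
    exact mul_le_mul_of_nonneg_left (hM t ht) (norm_nonneg c)

variable {φ : ℝ → Ω → Ω} {L : ℝ → Ω → E →L[ℝ] E}

theorem setOf_backwardBounded_eq_top [CompleteSpace E] :
    {ω | backwardBounded L ω = ⊤} = ⋃ n : ℕ, {ω | ∀ t ≤ (0 : ℝ), ‖L t ω‖ ≤ n} := by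
  ext ω
  simp only [mem_ofPred_eq, mem_iUnion, Submodule.eq_top_iff']
  constructor
  · intro h
    obtain ⟨C, hC⟩ := banach_steinhaus (g := fun t : Iic (0 : ℝ) => L t ω) fun v =>
      let ⟨M, hM⟩ := h v; ⟨M, fun t => hM t t.2⟩
    obtain ⟨n, hn⟩ := exists_nat_ge C
    exact ⟨n, fun t ht => (hC ⟨t, ht⟩).trans hn⟩
  · rintro ⟨n, hn⟩ v
    exact ⟨n * ‖v‖, fun t ht => (L t ω).le_of_opNorm_le (hn t ht) v⟩

variable [TopologicalSpace Ω]

theorem mem_backwardBounded_of_apply_mem (hLc : Continuous fun p : ℝ × Ω => L p.1 p.2)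
    (hLcoc : ∀ s t ω, L (s + t) ω = (L s (φ t ω)).comp (L t ω)) {t : ℝ} {ω : Ω} {v : E}
    (h : L t ω v ∈ backwardBounded L (φ t ω)) : v ∈ backwardBounded L ω := by
  obtain ⟨M, hM⟩ := h
  have hcont : Continuous fun u => ‖L u ω v‖ :=
    ((hLc.comp (continuous_id.prodMk continuous_const)).clm_apply continuous_const).norm
  show ∃ M', ∀ u ≤ (0 : ℝ), ‖L u ω v‖ ≤ M'
  refine hcont.exists_forall_le_of_Iic (a := t) (M := M) (fun u hu => ?_) 0
  have hsplit : L u ω v = L (u - t) (φ t ω) (L t ω v) := by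
    rw [← ContinuousLinearMap.comp_apply, ← hLcoc, sub_add_cancel]
  rw [hsplit]
  exact hM _ (by linarith)

theorem backwardBounded_eq_top_of_flow (hLc : Continuous fun p : ℝ × Ω => L p.1 p.2)
    (hLcoc : ∀ s t ω, L (s + t) ω = (L s (φ t ω)).comp (L t ω)) {t : ℝ} {ω : Ω}
    (h : backwardBounded L (φ t ω) = ⊤) : backwardBounded L ω = ⊤ :=
  eq_top_iff.2 fun _ _ => mem_backwardBounded_of_apply_mem hLc hLcoc (h ▸ Submodule.mem_top)

theorem isMeagre_setOf_backwardBounded_eq_top [CompleteSpace E]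
    (hLc : Continuous fun p : ℝ × Ω => L p.1 p.2)
    (hLcoc : ∀ s t ω, L (s + t) ω = (L s (φ t ω)).comp (L t ω)) {ω₀ : Ω}
    (hω₀ : Dense (range fun t => φ t ω₀)) (hω₀L : backwardBounded L ω₀ ≠ ⊤) :
    IsMeagre {ω | backwardBounded L ω = ⊤} := by
  have hdense : Dense {ω | backwardBounded L ω = ⊤}ᶜ := by
    refine hω₀.mono ?_
    rintro _ ⟨t, rfl⟩ h
    exact hω₀L (backwardBounded_eq_top_of_flow hLc hLcoc h)
  rw [setOf_backwardBounded_eq_top] at hdense ⊢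
  refine isMeagre_iUnion_of_isClosed_of_dense_compl (fun n => ?_) hdense
  simp only [ofPred_forall]
  exact isClosed_biInter fun t _ =>
    isClosed_le (hLc.comp (continuous_const.prodMk continuous_id)).norm continuous_const

end Cocycle

section SkewProduct

variable {Ω P : Type*} {φ : ℝ → Ω → Ω} {σ' : ℝ → Ω × P → Ω × P}

theorem exists_flow_eq_mk (hφ0 : ∀ ω, φ 0 ω = ω) (hφadd : ∀ s t ω, φ (s + t) ω = φ s (φ t ω))
    (hσ0 : ∀ x, σ' 0 x = x) (hσadd : ∀ s t x, σ' (s + t) x = σ' s (σ' t x))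
    (hσfst : ∀ t x, (σ' t x).1 = φ t x.1) (ω : Ω) (t : ℝ) (θ : P) :
    ∃ θ', σ' t (ω, θ') = (φ t ω, θ) := by
  refine ⟨(σ' (-t) (φ t ω, θ)).2, ?_⟩
  have hback : (ω, (σ' (-t) (φ t ω, θ)).2) = σ' (-t) (φ t ω, θ) :=
    Prod.ext (by rw [hσfst, ← hφadd, neg_add_cancel, hφ0]) rfl
  rw [hback, ← hσadd, add_neg_cancel, hσ0]

theorem dense_setOf_flow_ne [TopologicalSpace Ω] [TopologicalSpace P]
    [∀ θ : P, (𝓝[≠] θ).NeBot] (hφ0 : ∀ ω, φ 0 ω = ω)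
    (hφadd : ∀ s t ω, φ (s + t) ω = φ s (φ t ω))
    (hσc : Continuous fun p : ℝ × (Ω × P) => σ' p.1 p.2)
    (hσ0 : ∀ x, σ' 0 x = x) (hσadd : ∀ s t x, σ' (s + t) x = σ' s (σ' t x))
    (hσfst : ∀ t x, (σ' t x).1 = φ t x.1) {ω₀ : Ω} (hω₀ : Dense (range fun t => φ t ω₀))
    (θ₀ : P) : Dense {x | ∃ (t : ℝ) (θ : P), θ ≠ θ₀ ∧ x = σ' t (ω₀, θ)} := by
  set F : ℝ × P → Ω × P := fun p => σ' p.1 (ω₀, p.2)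
  have hF : Continuous F :=
    hσc.comp (continuous_fst.prodMk (continuous_const.prodMk continuous_snd))
  have hFdense : DenseRange F := by
    refine (hω₀.prod dense_univ).mono ?_
    rintro ⟨_, θ⟩ ⟨⟨t, rfl⟩, -⟩
    obtain ⟨θ', h⟩ := exists_flow_eq_mk hφ0 hφadd hσ0 hσadd hσfst ω₀ t θ
    exact ⟨(t, θ'), h⟩
  refine (hFdense.dense_image hF (dense_univ.prod (dense_compl_singleton θ₀))).mono ?_
  rintro _ ⟨⟨t, θ⟩, ⟨-, hθ⟩, rfl⟩
  exact ⟨t, θ, hθ, rfl⟩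

end SkewProduct

theorem stmt18_general {Ω E : Type*} [MetricSpace Ω]
    [NormedAddCommGroup E] [NormedSpace ℝ E] [Fact (0 < Real.pi)]
    (hrank : Module.finrank ℝ E = 2)
    (φ : ℝ → Ω → Ω)
    (hφ0 : ∀ ω, φ 0 ω = ω) (hφadd : ∀ s t ω, φ (s + t) ω = φ s (φ t ω))
    (hmin : ∀ ω, Dense (Set.range fun t => φ t ω))
    (σ' : ℝ → Ω × AddCircle Real.pi → Ω × AddCircle Real.pi)
    (hσc : Continuous fun p : ℝ × (Ω × AddCircle Real.pi) => σ' p.1 p.2)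
    (hσ0 : ∀ x, σ' 0 x = x) (hσadd : ∀ s t x, σ' (s + t) x = σ' s (σ' t x))
    (hσfst : ∀ t x, (σ' t x).1 = φ t x.1)
    (L : ℝ → Ω → E →L[ℝ] E)
    (hLc : Continuous fun p : ℝ × Ω => L p.1 p.2)
    (hLcoc : ∀ s t ω, L (s + t) ω = (L s (φ t ω)).comp (L t ω))
    (dir : AddCircle Real.pi → E)
    (hdir0 : ∀ θ, dir θ ≠ 0)
    (hdirindep : ∀ θ₁ θ₂ : AddCircle Real.pi, θ₁ ≠ θ₂ → ∀ c : ℝ, dir θ₁ ≠ c • dir θ₂)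
    (hcompat : ∀ (t : ℝ) (ω : Ω) (θ : AddCircle Real.pi),
      ∃ c : ℝ, c ≠ 0 ∧ L t ω (dir θ) = c • dir (σ' t (ω, θ)).2)
    (β : Ω × AddCircle Real.pi → ℝ)
    (hβusc : UpperSemicontinuous β) (hβ0 : ∀ x, 0 ≤ β x)
    (hβchar : ∀ (ω : Ω) (θ : AddCircle Real.pi),
      0 < β (ω, θ) ↔ ∃ M : ℝ, ∀ t ≤ (0 : ℝ), ‖L t ω (dir θ)‖ ≤ M)
    (Ωp : Set Ω) (hΩp : Ωp = {ω | ∀ θ, 0 < β (ω, θ)}) (hne : Ωp ≠ Set.univ) :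
    (∀ ω₀ ∉ Ωp, {θ | 0 < β (ω₀, θ)}.Subsingleton ∧
      ∀ θ₀ : AddCircle Real.pi,
        Dense {x : Ω × AddCircle Real.pi | ∃ (t : ℝ) (θ : AddCircle Real.pi),
          θ ≠ θ₀ ∧ x = σ' t (ω₀, θ)}) ∧
    {x | β x = 0} ∈ residual (Ω × AddCircle Real.pi) ∧
    IsMeagre Ωp := by
  have : FiniteDimensional ℝ E := Module.finite_of_finrank_eq_succ hrank
  have : CompleteSpace E := FiniteDimensional.complete ℝ E
  have hβ : ∀ ω θ, 0 < β (ω, θ) ↔ dir θ ∈ backwardBounded L ω := hβchar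
  have htop : ∀ ω θ₁ θ₂, θ₁ ≠ θ₂ → 0 < β (ω, θ₁) → 0 < β (ω, θ₂) →
      backwardBounded L ω = ⊤ := fun ω θ₁ θ₂ h12 h₁ h₂ =>
    Submodule.eq_top_of_linearIndependent_pair hrank
      ((LinearIndependent.pair_iff' (hdir0 θ₁)).2 fun c hc => hdirindep θ₂ θ₁ h12.symm c hc.symm)
      ((hβ ω θ₁).1 h₁) ((hβ ω θ₂).1 h₂)
  have hΩp' : Ωp = {ω | backwardBounded L ω = ⊤} := by
    refine hΩp.trans (Set.ext fun ω => ⟨fun h => ?_, fun h θ => (hβ ω θ).2 (h ▸ trivial)⟩)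
    obtain ⟨θ₁, θ₂, h12⟩ := exists_pair_ne (AddCircle Real.pi)
    exact htop ω θ₁ θ₂ h12 (h θ₁) (h θ₂)
  have hsub : ∀ ω ∉ Ωp, {θ | 0 < β (ω, θ)}.Subsingleton := fun ω hω θ₁ h₁ θ₂ h₂ =>
    by_contra fun h12 => hω (hΩp' ▸ htop ω θ₁ θ₂ h12 h₁ h₂)
  have hβflow : ∀ t ω θ, 0 < β (σ' t (ω, θ)) → 0 < β (ω, θ) := by
    intro t ω θ h
    obtain ⟨c, -, hc⟩ := hcompat t ω θ
    refine (hβ ω θ).2 (mem_backwardBounded_of_apply_mem hLc hLcoc (t := t) ?_)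
    rw [hc, ← hσfst t (ω, θ)]
    exact Submodule.smul_mem _ c ((hβ _ _).1 (by rwa [Prod.mk.eta]))
  have hdense := fun ω => dense_setOf_flow_ne hφ0 hφadd hσc hσ0 hσadd hσfst (hmin ω)
  obtain ⟨ω₀, hω₀⟩ := (ne_univ_iff_exists_notMem Ωp).1 hne
  obtain ⟨θ₀, hθ₀⟩ : ∃ θ₀, ∀ θ ≠ θ₀, ¬ 0 < β (ω₀, θ) := by
    rcases (hsub ω₀ hω₀).eq_empty_or_singleton with h | ⟨θ₀, h⟩
    · exact ⟨0, fun θ _ hθ => h.subset hθ⟩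
    · exact ⟨θ₀, fun θ hθ₀ hθ => hθ₀ (h.subset hθ)⟩
  refine ⟨fun ω hω => ⟨hsub ω hω, hdense ω⟩, ?_, ?_⟩
  · have hβle := hβusc.eventually_residual_le (hdense ω₀ θ₀) (c := 0) <| by
      rintro _ ⟨t, θ, hθ, rfl⟩
      exact not_lt.1 fun h => hθ₀ θ hθ (hβflow t ω₀ θ h)
    filter_upwards [hβle] with x hx using le_antisymm hx (hβ0 x)
  · rw [hΩp'] at hω₀ ⊢
    exact isMeagre_setOf_backwardBounded_eq_top hLc hLcoc (hmin ω₀) hω₀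

/-- Suppose the minimal flow `(Ω,σ)` carries a continuous linear cocycle `L`
(on a plane `E`) whose set `Ω⁺` of points with all solutions bounded on
`(-∞,0]` is proper: `Ω⁺ ≠ Ω`. Then for every `ω₀ ∉ Ω⁺` the set of directions
`θ ∈ ℙ¹` with backward-bounded solution has at most one point; consequently for
any `θ₀` the set `D = {σ̃(t,ω₀,θ) : t ∈ ℝ, θ ≠ θ₀}` is dense in `Ω×ℙ`, the
upper semicontinuous function `β̃` (positive exactly at backward-bounded
directions) vanishes on a residual subset of `Ω×ℙ`, and `Ω⁺` is of the first
Baire category. `ℙ¹` is realized as `AddCircle π`, with `dir θ` a nonzero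
direction vector of the line `θ`. -/
theorem stmt18 {Ω E : Type*} [MetricSpace Ω] [CompactSpace Ω]
    [NormedAddCommGroup E] [NormedSpace ℝ E] [Fact (0 < Real.pi)]
    (hrank : Module.finrank ℝ E = 2)
    (φ : ℝ → Ω → Ω) (hφc : Continuous fun p : ℝ × Ω => φ p.1 p.2)
    (hφ0 : ∀ ω, φ 0 ω = ω) (hφadd : ∀ s t ω, φ (s + t) ω = φ s (φ t ω))
    (hmin : ∀ ω, Dense (Set.range fun t => φ t ω))
    (σ' : ℝ → Ω × AddCircle Real.pi → Ω × AddCircle Real.pi)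
    (hσc : Continuous fun p : ℝ × (Ω × AddCircle Real.pi) => σ' p.1 p.2)
    (hσ0 : ∀ x, σ' 0 x = x) (hσadd : ∀ s t x, σ' (s + t) x = σ' s (σ' t x))
    (hσfst : ∀ t x, (σ' t x).1 = φ t x.1)
    (L : ℝ → Ω → E →L[ℝ] E)
    (hLc : Continuous fun p : ℝ × Ω => L p.1 p.2)
    (hL0 : ∀ ω, L 0 ω = ContinuousLinearMap.id ℝ E)
    (hLcoc : ∀ s t ω, L (s + t) ω = (L s (φ t ω)).comp (L t ω))
    (dir : AddCircle Real.pi → E) (hdirc : Continuous dir)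
    (hdir0 : ∀ θ, dir θ ≠ 0)
    (hdirindep : ∀ θ₁ θ₂ : AddCircle Real.pi, θ₁ ≠ θ₂ → ∀ c : ℝ, dir θ₁ ≠ c • dir θ₂)
    (hdirspan : ∀ v : E, v ≠ 0 → ∃ (θ : AddCircle Real.pi) (c : ℝ), v = c • dir θ)
    (hcompat : ∀ (t : ℝ) (ω : Ω) (θ : AddCircle Real.pi),
      ∃ c : ℝ, c ≠ 0 ∧ L t ω (dir θ) = c • dir (σ' t (ω, θ)).2)
    (β : Ω × AddCircle Real.pi → ℝ)
    (hβusc : UpperSemicontinuous β) (hβ0 : ∀ x, 0 ≤ β x)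
    (hβchar : ∀ (ω : Ω) (θ : AddCircle Real.pi),
      0 < β (ω, θ) ↔ ∃ M : ℝ, ∀ t ≤ (0 : ℝ), ‖L t ω (dir θ)‖ ≤ M)
    (Ωp : Set Ω) (hΩp : Ωp = {ω | ∀ θ, 0 < β (ω, θ)}) (hne : Ωp ≠ Set.univ) :
    (∀ ω₀ ∉ Ωp, {θ | 0 < β (ω₀, θ)}.Subsingleton ∧
      ∀ θ₀ : AddCircle Real.pi,
        Dense {x : Ω × AddCircle Real.pi | ∃ (t : ℝ) (θ : AddCircle Real.pi),
          θ ≠ θ₀ ∧ x = σ' t (ω₀, θ)}) ∧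
    {x | β x = 0} ∈ residual (Ω × AddCircle Real.pi) ∧
    IsMeagre Ωp :=
  stmt18_general hrank φ hφ0 hφadd hmin σ' hσc hσ0 hσadd hσfst L hLc hLcoc dir hdir0 hdirindep
    hcompat β hβusc hβ0 hβchar Ωp hΩp hne
end
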